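/- arXiv:cs/0701091 — 7 statements merged into one kernel-verified Lean document; each statement's English description precedes it below -/
import Mathlib

section
/- Every T-codeword x with x_n = 1 covers at least one minimal deviation; that is, there exists a minimal deviation y of T such that x covers y. -/
open SimpleGraph Finset

/-- In the tree `T` rooted at `n`, `v` is a child of `u`. -/
def IsChild {V : Type} (T : SimpleGraph V) (n u v : V) : Prop :=
  T.Adj u v ∧ T.dist v n = T.dist u n + 1

/-- A `T`-codeword: a map on the variable nodes `P` (encoded as a map on all vertices
vanishing off `P`) such that, at every check node, the sum of the values of its
variable neighbors is `0` in `ZMod 2`. -/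
def IsCodeword {V : Type} (T : SimpleGraph V) [Fintype V] [DecidableRel T.Adj]
    (P : Set V) (x : V → ZMod 2) : Prop :=
  (∀ v, v ∉ P → x v = 0) ∧
  ∀ q, q ∉ P → ∑ p ∈ T.neighborFinset q, x p = 0

/-- `x` covers `y` : every variable node where `y` is `1` also has `x` equal to `1`. -/
def Covers {V : Type} (P : Set V) (x y : V → ZMod 2) : Prop :=
  ∀ p ∈ P, y p = 1 → x p = 1

/-- A minimal deviation: a `T`-codeword `x` with `x n = 1` such that the only nonzero
`T`-codeword covered by `x` is `x` itself. -/
def IsMinimalDeviation {V : Type} (T : SimpleGraph V) [Fintype V] [DecidableRel T.Adj]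
    (P : Set V) (n : V) (x : V → ZMod 2) : Prop :=
  IsCodeword T P x ∧ x n = 1 ∧
  ∀ y, IsCodeword T P y → Covers P x y → y ≠ 0 → y = x

open Function

namespace ZMod2

variable {V : Type}

theorem eq_one_of_ne_zero {a : ZMod 2} (ha : a ≠ 0) : a = 1 := by
  revert a; decide

theorem eq_of_support_eq {y z : V → ZMod 2} (h : support y = support z) : y = z := by
  funext v
  by_cases hv : v ∈ support z
  · exact (eq_one_of_ne_zero (h ▸ hv : v ∈ support y)).trans (eq_one_of_ne_zero hv).symm
  · rw [notMem_support.mp hv, ← notMem_support, h]; exact hv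

theorem support_add_ssubset {y z : V → ZMod 2} (hzy : support z ⊆ support y) (hz : z ≠ 0) :
    support (y + z) ⊂ support y := by
  refine Set.ssubset_iff_exists.mpr ⟨fun v hv => ?_, ?_⟩
  · by_contra hyv
    have hzv : z v = 0 := notMem_support.mp fun h => hyv (hzy h)
    exact hv (by simp [notMem_support.mp hyv, hzv])
  · obtain ⟨v, hzv⟩ := support_nonempty_iff.mpr hz
    refine ⟨v, hzy hzv, fun hv => hv ?_⟩
    rw [Pi.add_apply, eq_one_of_ne_zero (hzy hzv), eq_one_of_ne_zero hzv]
    decide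

/-- Among the vectors of an additively closed set that are nonzero at `n`, one of minimal
support is also minimal among all nonzero vectors of the set: a smaller `z` with `z n = 0`
would make `y + z` a smaller vector still nonzero at `n`. -/
theorem exists_minimal_support_subset {S : Set (V → ZMod 2)} [Finite V]
    (hS : ∀ y ∈ S, ∀ z ∈ S, y + z ∈ S) {n : V} {x : V → ZMod 2} (hx : x ∈ S)
    (hxn : x n ≠ 0) :
    ∃ y ∈ S, y n ≠ 0 ∧ support y ⊆ support x ∧
      ∀ z ∈ S, support z ⊆ support y → z ≠ 0 → z = y := by
  obtain ⟨y, ⟨hyS, hyn, hyx⟩, hmin⟩ := Set.exists_min_image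
    {y | y ∈ S ∧ y n ≠ 0 ∧ support y ⊆ support x} (fun y => (support y).ncard)
    (Set.toFinite _) ⟨x, hx, hxn, subset_rfl⟩
  refine ⟨y, hyS, hyn, hyx, fun z hzS hzy hz => ?_⟩
  by_contra hne
  have hzy' : support z ⊂ support y :=
    ssubset_of_subset_of_ne hzy fun h => hne (eq_of_support_eq h)
  by_cases hzn : z n = 0
  · have hw := support_add_ssubset hzy hz
    have := hmin (y + z) ⟨hS y hyS z hzS, by simpa [hzn] using hyn, hw.subset.trans hyx⟩
    exact (Set.ncard_lt_ncard hw).not_ge this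
  · have := hmin z ⟨hzS, hzn, hzy.trans hyx⟩
    exact (Set.ncard_lt_ncard hzy').not_ge this

end ZMod2

theorem IsCodeword.add {V : Type} [Fintype V] {T : SimpleGraph V} [DecidableRel T.Adj]
    {P : Set V} {y z : V → ZMod 2} (hy : IsCodeword T P y) (hz : IsCodeword T P z) :
    IsCodeword T P (y + z) := by
  refine ⟨fun v hv => by simp [hy.1 v hv, hz.1 v hv], fun q hq => ?_⟩
  simp only [Pi.add_apply, Finset.sum_add_distrib, hy.2 q hq, hz.2 q hq, add_zero]

theorem covers_iff_support_subset {V : Type} {P : Set V} {x y : V → ZMod 2}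
    (hy : ∀ v, v ∉ P → y v = 0) : Covers P x y ↔ support y ⊆ support x := by
  constructor
  · intro h v hv
    have hvP : v ∈ P := by_contra fun hvP => hv (hy v hvP)
    simp [h v hvP (ZMod2.eq_one_of_ne_zero hv)]
  · intro h p _ hyp
    exact ZMod2.eq_one_of_ne_zero (h (by simp [hyp]))

theorem codeword_covers_minimal_deviation_general {V : Type} [Fintype V]
    (T : SimpleGraph V) [DecidableRel T.Adj]
    (P : Set V)
    (n : V)
    (x : V → ZMod 2) (hx : IsCodeword T P x) (hxn : x n = 1) :
    ∃ y, IsMinimalDeviation T P n y ∧ Covers P x y := by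
  obtain ⟨y, hy, hyn, hyx, hmin⟩ :=
    ZMod2.exists_minimal_support_subset (S := {y | IsCodeword T P y})
      (fun _ hy _ hz => hy.add hz) hx (hxn ▸ one_ne_zero)
  refine ⟨y, ⟨hy, ZMod2.eq_one_of_ne_zero hyn, fun z hz hzy => ?_⟩,
    (covers_iff_support_subset hy.1).mpr hyx⟩
  exact hmin z hz ((covers_iff_support_subset hz.1).mp hzy)

/-- every `T`-codeword `x` with `x n = 1` covers at least one minimal
deviation of `T`. -/
theorem codeword_covers_minimal_deviation {V : Type} [Fintype V]
    (T : SimpleGraph V) [DecidableRel T.Adj] (hT : T.IsTree)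
    (P : Set V) (hbip : ∀ u v, T.Adj u v → (u ∈ P ↔ v ∉ P))
    (n : V) (hn : n ∈ P)
    (x : V → ZMod 2) (hx : IsCodeword T P x) (hxn : x n = 1) :
    ∃ y, IsMinimalDeviation T P n y ∧ Covers P x y :=
  codeword_covers_minimal_deviation_general T P n x hx hxn
end

section
/- Let x be a minimal deviation of T with support X. Then every check node q ∈ X satisfies: the parent variable node of q has x-value 1, and exactly one child variable node p of q satisfies x_p = 1. In particular, every check node of X has exactly two variable neighbors lying in the support of x. -/
open SimpleGraph Finset

variable {V : Type} {T : SimpleGraph V}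

/-- If `c` lies on a shortest walk from `a` to `b`, then distances add. -/
lemma aux_dist_add (hc : T.Connected) {a b c : V} (w : T.Walk a b)
    (hw : w.length = T.dist a b) (hm : c ∈ w.support) :
    T.dist a c + T.dist c b = T.dist a b := by
  classical
  have h1 : T.dist a c ≤ (w.takeUntil c hm).length := SimpleGraph.dist_le _
  have h2 : T.dist c b ≤ (w.dropUntil c hm).length := SimpleGraph.dist_le _
  have h3 : (w.takeUntil c hm).length + (w.dropUntil c hm).length = w.length := by
    have := congrArg Walk.length (w.take_spec hm)
    rw [Walk.length_append] at this
    exact this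
  have h4 : T.dist a b ≤ T.dist a c + T.dist c b := hc.dist_triangle
  omega

/-- Uniqueness of the parent in a tree. -/
lemma aux_parent_unique (hT : T.IsTree) {n v r q : V}
    (h1 : T.Adj r v) (h2 : T.Adj q v)
    (hd1 : T.dist r n + 1 = T.dist v n) (hd2 : T.dist q n + 1 = T.dist v n) : r = q := by
  have hc := hT.isConnected
  obtain ⟨w1, hw1⟩ := hc.exists_walk_length_eq_dist r n
  obtain ⟨w2, hw2⟩ := hc.exists_walk_length_eq_dist q n
  have hW1 : (Walk.cons h1.symm w1).length = T.dist v n := by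
    simp [Walk.length_cons, hw1]; omega
  have hW2 : (Walk.cons h2.symm w2).length = T.dist v n := by
    simp [Walk.length_cons, hw2]; omega
  have p1 : (Walk.cons h1.symm w1).IsPath := Walk.isPath_of_length_eq_dist _ hW1
  have p2 : (Walk.cons h2.symm w2).IsPath := Walk.isPath_of_length_eq_dist _ hW2
  have := hT.IsAcyclic.path_unique ⟨Walk.cons h1.symm w1, p1⟩ ⟨Walk.cons h2.symm w2, p2⟩
  have hsup := congrArg (fun p : T.Path v n => (p : T.Walk v n).support) this
  simp only [Walk.support_cons] at hsup
  rw [w1.support_eq_cons, w2.support_eq_cons] at hsup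
  injection hsup with _ h'
  injection h' with h'' _

/-- Every vertex other than `n` has a parent. -/
lemma aux_exists_parent (hc : T.Connected) {v n : V} (h : v ≠ n) :
    ∃ w, T.Adj v w ∧ T.dist w n + 1 = T.dist v n := by
  have hd : T.dist v n ≠ 0 := by
    rw [SimpleGraph.dist_ne_zero_iff_ne_and_reachable]
    exact ⟨h, hc.preconnected v n⟩
  obtain ⟨w, hw⟩ := SimpleGraph.exists_walk_of_dist_ne_zero hd
  cases w with
  | nil => simp at hw; exact absurd rfl h
  | cons hadj t =>
      rename_i b
      refine ⟨b, hadj, ?_⟩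
      have h1 : T.dist b n ≤ t.length := SimpleGraph.dist_le _
      have h2 : T.dist v n ≤ 1 + T.dist b n := by
        have : T.dist v b ≤ 1 := by
          have := SimpleGraph.dist_le (Walk.cons hadj Walk.nil)
          simpa using this
        have := hc.dist_triangle (u := v) (v := b) (w := n)
        omega
      simp [Walk.length_cons] at hw
      omega

/-- Parity: membership in `P` corresponds to even distance to a root in `P`. -/
lemma aux_parity (hc : T.Connected) {P : Set V}
    (hbip : ∀ u v, T.Adj u v → (u ∈ P ↔ v ∉ P)) {r : V} (hr : r ∈ P) :
    ∀ v, v ∈ P ↔ Even (T.dist v r) := by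
  intro v
  generalize hd : T.dist v r = k
  induction k using Nat.strong_induction_on generalizing v with
  | _ k ih =>
    match k with
    | 0 =>
      have : v = r := (hc.dist_eq_zero_iff).mp hd
      subst this; simpa using hr
    | m + 1 =>
      have hvr : v ≠ r := by
        intro h; subst h; rw [SimpleGraph.dist_self] at hd; omega
      obtain ⟨w, hadj, hw⟩ := aux_exists_parent hc hvr
      have hwm : T.dist w r = m := by omega
      have ihw := ih m (by omega) w hwm
      have hflip := hbip v w hadj
      rw [hflip, ihw, Nat.even_add_one]

/-- Adjacent vertices have distances to `n` differing by exactly one. -/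
lemma aux_dichotomy (hc : T.Connected) {P : Set V}
    (hbip : ∀ u v, T.Adj u v → (u ∈ P ↔ v ∉ P)) {n : V} (hn : n ∈ P)
    {u v : V} (h : T.Adj u v) :
    T.dist u n + 1 = T.dist v n ∨ T.dist v n + 1 = T.dist u n := by
  have hne : T.dist u n ≠ T.dist v n := by
    intro heq
    have h1 := aux_parity hc hbip hn u
    have h2 := aux_parity hc hbip hn v
    have h3 := hbip u v h
    rw [heq] at h1
    tauto
  have h1 : T.dist u n ≤ 1 + T.dist v n := by
    have : T.dist u v ≤ 1 := by
      have := SimpleGraph.dist_le (Walk.cons h Walk.nil); simpa using this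
    have := hc.dist_triangle (u := u) (v := v) (w := n); omega
  have h2 : T.dist v n ≤ 1 + T.dist u n := by
    have : T.dist v u ≤ 1 := by
      have := SimpleGraph.dist_le (Walk.cons h.symm Walk.nil); simpa using this
    have := hc.dist_triangle (u := v) (v := u) (w := n); omega
  omega

/-- Subtree closure under children. -/
lemma aux_sub_child (hc : T.Connected) {p n v w : V}
    (hv : T.dist v p + T.dist p n = T.dist v n)
    (h : T.Adj v w) (hw : T.dist v n + 1 = T.dist w n) :
    T.dist w p + T.dist p n = T.dist w n := by
  have t1 : T.dist w n ≤ T.dist w p + T.dist p n := hc.dist_triangle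
  have t2 : T.dist w p ≤ T.dist v p + 1 := by
    have h1 : T.dist w v ≤ 1 := by
      have := SimpleGraph.dist_le (Walk.cons h.symm Walk.nil); simpa using this
    have := hc.dist_triangle (u := w) (v := v) (w := p); omega
  omega

/-- Subtree closure under the parent, as long as we are not at the subtree root. -/
lemma aux_sub_parent (hT : T.IsTree) {p n v w : V}
    (hv : T.dist v p + T.dist p n = T.dist v n) (hne : v ≠ p)
    (h : T.Adj v w) (hw : T.dist w n + 1 = T.dist v n) :
    T.dist w p + T.dist p n = T.dist w n := by
  have hc := hT.isConnected
  obtain ⟨w1, hw1⟩ := hc.exists_walk_length_eq_dist v p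
  obtain ⟨w2, hw2⟩ := hc.exists_walk_length_eq_dist p n
  obtain ⟨w3, hw3⟩ := hc.exists_walk_length_eq_dist w n
  have hW1 : (w1.append w2).length = T.dist v n := by
    rw [Walk.length_append, hw1, hw2, hv]
  have hW2 : (Walk.cons h w3).length = T.dist v n := by
    simp [Walk.length_cons, hw3]; omega
  have p1 : (w1.append w2).IsPath := Walk.isPath_of_length_eq_dist _ hW1
  have p2 : (Walk.cons h w3).IsPath := Walk.isPath_of_length_eq_dist _ hW2
  have heq := hT.IsAcyclic.path_unique ⟨w1.append w2, p1⟩ ⟨Walk.cons h w3, p2⟩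
  have hpsup : p ∈ (w1.append w2).support := by
    rw [Walk.mem_support_append_iff]; exact Or.inr w2.start_mem_support
  have hpsup2 : p ∈ (Walk.cons h w3).support := by
    have := congrArg (fun q : T.Path v n => (q : T.Walk v n).support) heq
    simpa [← this] using hpsup
  rw [Walk.support_cons] at hpsup2
  have hpw3 : p ∈ w3.support := by
    rcases List.mem_cons.mp hpsup2 with h' | h'
    · exact absurd h'.symm hne
    · exact h'
  exact aux_dist_add hc w3 hw3 hpw3

/-- The support of a `T`-codeword `x`: the variable nodes `p` with `x p = 1` together
with all check nodes adjacent to at least one such variable node. -/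
def Support {V : Type} (T : SimpleGraph V) (P : Set V) (x : V → ZMod 2) : Set V :=
  {v | (v ∈ P ∧ x v = 1) ∨ (v ∉ P ∧ ∃ p ∈ P, T.Adj v p ∧ x p = 1)}

/-- if `x` is a minimal deviation with support `X`, then every check node
`q ∈ X` satisfies: the parent variable node of `q` has `x`-value `1`, exactly one child
variable node `p` of `q` satisfies `x p = 1`, and in particular `q` has exactly two
variable neighbors lying in the support of `x`. -/
theorem minimal_deviation_check_nodes {V : Type} [Fintype V]
    (T : SimpleGraph V) [DecidableRel T.Adj] (hT : T.IsTree)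
    (P : Set V) (hbip : ∀ u v, T.Adj u v → (u ∈ P ↔ v ∉ P))
    (n : V) (hn : n ∈ P)
    (x : V → ZMod 2) (hx : IsMinimalDeviation T P n x) :
    ∀ q ∈ Support T P x, q ∉ P →
      (∀ u, IsChild T n u q → x u = 1) ∧
      (∃! p, IsChild T n q p ∧ x p = 1) ∧
      ((T.neighborFinset q).filter (fun p => x p = 1)).card = 2 := by
  classical
  obtain ⟨⟨hx0, hxsum⟩, hxn, hmin⟩ := hx
  have hc := hT.isConnected
  intro q hq hqP
  have hnbP : ∀ w, T.Adj q w → w ∈ P := by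
    intro w h
    by_contra hw
    exact hqP ((hbip q w h).mpr hw)
  -- key: there are no two distinct children of `q` with value 1
  have key : ∀ p1 p2, T.Adj q p1 → T.Adj q p2 → T.dist q n + 1 = T.dist p1 n →
      T.dist q n + 1 = T.dist p2 n → x p1 = 1 → x p2 = 1 → p1 = p2 := by
    intro p1 p2 ha1 ha2 hd1 hd2 hx1 hx2
    by_contra hpne
    have hp1P : p1 ∈ P := hnbP p1 ha1
    have hp2P : p2 ∈ P := hnbP p2 ha2
    have hdq1 : T.dist q p1 = 1 := SimpleGraph.dist_eq_one_iff_adj.mpr ha1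
    have hdq2 : T.dist q p2 = 1 := SimpleGraph.dist_eq_one_iff_adj.mpr ha2
    set y : V → ZMod 2 := fun v =>
      if (T.dist v p1 + T.dist p1 n = T.dist v n) ∨ (T.dist v p2 + T.dist p2 n = T.dist v n)
      then 0 else x v with hy
    have hy0 : ∀ v, ((T.dist v p1 + T.dist p1 n = T.dist v n) ∨
        (T.dist v p2 + T.dist p2 n = T.dist v n)) → y v = 0 := by
      intro v h; rw [hy]; exact if_pos h
    have hyx : ∀ v, ¬ ((T.dist v p1 + T.dist p1 n = T.dist v n) ∨
        (T.dist v p2 + T.dist p2 n = T.dist v n)) → y v = x v := by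
      intro v h; rw [hy]; exact if_neg h
    have hq1 : ¬ (T.dist q p1 + T.dist p1 n = T.dist q n) := by omega
    have hq2 : ¬ (T.dist q p2 + T.dist p2 n = T.dist q n) := by omega
    have hyp1 : y p1 = 0 := hy0 p1 (Or.inl (by rw [SimpleGraph.dist_self]; omega))
    have hyp2 : y p2 = 0 := hy0 p2 (Or.inr (by rw [SimpleGraph.dist_self]; omega))
    have hyn : y n = x n := by
      apply hyx
      rw [SimpleGraph.dist_self, SimpleGraph.dist_comm (u := n) (v := p1),
        SimpleGraph.dist_comm (u := n) (v := p2)]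
      omega
    have hycode : IsCodeword T P y := by
      constructor
      · intro v hv
        by_cases h : (T.dist v p1 + T.dist p1 n = T.dist v n) ∨
            (T.dist v p2 + T.dist p2 n = T.dist v n)
        · exact hy0 v h
        · rw [hyx v h]; exact hx0 v hv
      · intro r hrP
        by_cases hr1 : T.dist r p1 + T.dist p1 n = T.dist r n
        · apply Finset.sum_eq_zero
          intro w hw
          rw [SimpleGraph.mem_neighborFinset] at hw
          rcases aux_dichotomy hc hbip hn hw with hcase | hcase
          · exact hy0 w (Or.inl (aux_sub_child hc hr1 hw hcase))
          · exact hy0 w (Or.inl (aux_sub_parent hT hr1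
              (fun h => hrP (h ▸ hp1P)) hw hcase))
        · by_cases hr2 : T.dist r p2 + T.dist p2 n = T.dist r n
          · apply Finset.sum_eq_zero
            intro w hw
            rw [SimpleGraph.mem_neighborFinset] at hw
            rcases aux_dichotomy hc hbip hn hw with hcase | hcase
            · exact hy0 w (Or.inr (aux_sub_child hc hr2 hw hcase))
            · exact hy0 w (Or.inr (aux_sub_parent hT hr2
                (fun h => hrP (h ▸ hp2P)) hw hcase))
          · by_cases hrq : r = q
            · subst hrq
              have hsub : ({p1, p2} : Finset V) ⊆ T.neighborFinset r := by
                intro w hw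
                rw [Finset.mem_insert, Finset.mem_singleton] at hw
                rcases hw with rfl | rfl
                · exact (T.mem_neighborFinset r _).mpr ha1
                · exact (T.mem_neighborFinset r _).mpr ha2
              have hagree : ∀ w ∈ T.neighborFinset r \ {p1, p2}, y w = x w := by
                intro w hw
                rw [Finset.mem_sdiff, Finset.mem_insert, Finset.mem_singleton] at hw
                obtain ⟨hw1, hw2⟩ := hw
                push_neg at hw2
                rw [SimpleGraph.mem_neighborFinset] at hw1
                apply hyx
                rintro (hA | hB)
                · rcases aux_dichotomy hc hbip hn hw1 with hcase | hcase
                  · exact hq1 (aux_sub_parent hT hA hw2.1 hw1.symm hcase)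
                  · exact hq1 (aux_sub_child hc hA hw1.symm hcase)
                · rcases aux_dichotomy hc hbip hn hw1 with hcase | hcase
                  · exact hq2 (aux_sub_parent hT hB hw2.2 hw1.symm hcase)
                  · exact hq2 (aux_sub_child hc hB hw1.symm hcase)
              have e1 := Finset.sum_sdiff (f := y) hsub
              have e2 := Finset.sum_sdiff (f := x) hsub
              have e3 : ∑ w ∈ ({p1, p2} : Finset V), y w = 0 := by
                rw [Finset.sum_pair hpne, hyp1, hyp2, add_zero]
              have e4 : ∑ w ∈ ({p1, p2} : Finset V), x w = 0 := by
                rw [Finset.sum_pair hpne, hx1, hx2]; decide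
              have e5 : ∑ w ∈ T.neighborFinset r \ {p1, p2}, y w =
                  ∑ w ∈ T.neighborFinset r \ {p1, p2}, x w :=
                Finset.sum_congr rfl hagree
              have : ∑ w ∈ T.neighborFinset r, y w = ∑ w ∈ T.neighborFinset r, x w := by
                rw [← e1, ← e2, e3, e4, e5]
              rw [this]
              exact hxsum r hrP
            · have hagree : ∀ w ∈ T.neighborFinset r, y w = x w := by
                intro w hw
                rw [SimpleGraph.mem_neighborFinset] at hw
                apply hyx
                rintro (hA | hB)
                · rcases aux_dichotomy hc hbip hn hw with hcase | hcase
                  · by_cases hwp : w = p1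
                    · subst hwp
                      exact hrq (aux_parent_unique hT hw ha1 hcase hd1)
                    · exact hr1 (aux_sub_parent hT hA hwp hw.symm hcase)
                  · exact hr1 (aux_sub_child hc hA hw.symm hcase)
                · rcases aux_dichotomy hc hbip hn hw with hcase | hcase
                  · by_cases hwp : w = p2
                    · subst hwp
                      exact hrq (aux_parent_unique hT hw ha2 hcase hd2)
                    · exact hr2 (aux_sub_parent hT hB hwp hw.symm hcase)
                  · exact hr2 (aux_sub_child hc hB hw.symm hcase)
              rw [Finset.sum_congr rfl hagree]
              exact hxsum r hrP
    have hcov : Covers P x y := by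
      intro p hp hyp
      by_cases h : (T.dist p p1 + T.dist p1 n = T.dist p n) ∨
          (T.dist p p2 + T.dist p2 n = T.dist p n)
      · rw [hy0 p h] at hyp; exact absurd hyp (by decide)
      · rw [hyx p h] at hyp; exact hyp
    have hynz : y ≠ 0 := by
      intro h0
      have : y n = 0 := by rw [h0]; rfl
      rw [hyn, hxn] at this
      exact absurd this (by decide)
    have heq := hmin y hycode hcov hynz
    rw [heq] at hyp1
    rw [hx1] at hyp1
    exact absurd hyp1 (by decide)
  -- extract a support witness
  have hq' : ∃ p ∈ P, T.Adj q p ∧ x p = 1 := by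
    rcases hq with ⟨h1, _⟩ | ⟨_, h2⟩
    · exact absurd h1 hqP
    · exact h2
  obtain ⟨p0, hp0P, hadj0, hxp0⟩ := hq'
  have hqn : q ≠ n := fun h => hqP (h ▸ hn)
  obtain ⟨u, hqu, hud⟩ := aux_exists_parent hc hqn
  set F := (T.neighborFinset q).filter (fun p => x p = 1) with hF
  have hFsum : ((F.card : ℕ) : ZMod 2) = 0 := by
    have hval : ∀ a : ZMod 2, a = if a = 1 then 1 else 0 := by decide
    have h1 : ∑ w ∈ T.neighborFinset q, x w = (F.card : ZMod 2) := by
      rw [hF, ← Finset.sum_boole]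
      exact Finset.sum_congr rfl fun w _ => hval (x w)
    rw [← h1]
    exact hxsum q hqP
  have hFeven : 2 ∣ F.card := (ZMod.natCast_eq_zero_iff _ _).mp hFsum
  have hp0F : p0 ∈ F := Finset.mem_filter.mpr
    ⟨(T.mem_neighborFinset q p0).mpr hadj0, hxp0⟩
  have parent_val : ∀ u', T.Adj q u' → T.dist u' n + 1 = T.dist q n → x u' = 1 := by
    intro u' h1 h2
    by_contra hu0
    have hchild : ∀ w ∈ F, T.dist q n + 1 = T.dist w n := by
      intro w hwF
      rw [hF, Finset.mem_filter, SimpleGraph.mem_neighborFinset] at hwF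
      rcases aux_dichotomy hc hbip hn hwF.1 with h | h
      · exact h
      · have hwu : w = u' := aux_parent_unique hT hwF.1.symm h1.symm h h2
        exact absurd (hwu ▸ hwF.2) hu0
    have hcard : 1 < F.card := by
      have h1' : 0 < F.card := Finset.card_pos.mpr ⟨p0, hp0F⟩
      omega
    obtain ⟨a, ha, b, hb, hab⟩ := Finset.one_lt_card.mp hcard
    have haF := ha; have hbF := hb
    rw [hF, Finset.mem_filter, SimpleGraph.mem_neighborFinset] at haF hbF
    exact hab (key a b haF.1 hbF.1 (hchild a ha) (hchild b hb) haF.2 hbF.2)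
  have hxu : x u = 1 := parent_val u hqu hud
  have huF : u ∈ F := Finset.mem_filter.mpr
    ⟨(T.mem_neighborFinset q u).mpr hqu, hxu⟩
  have hchild_or : ∀ w ∈ F, w = u ∨ T.dist w n = T.dist q n + 1 := by
    intro w hwF
    rw [hF, Finset.mem_filter, SimpleGraph.mem_neighborFinset] at hwF
    rcases aux_dichotomy hc hbip hn hwF.1 with h | h
    · exact Or.inr h.symm
    · exact Or.inl (aux_parent_unique hT hwF.1.symm hqu.symm h hud)
  have hex : ∃ c ∈ F, T.dist c n = T.dist q n + 1 := by
    have hcard : 1 < F.card := by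
      have h1' : 0 < F.card := Finset.card_pos.mpr ⟨u, huF⟩
      omega
    obtain ⟨a, ha, b, hb, hab⟩ := Finset.one_lt_card.mp hcard
    rcases hchild_or a ha with rfl | hAc
    · rcases hchild_or b hb with rfl | hBc
      · exact absurd rfl hab
      · exact ⟨b, hb, hBc⟩
    · exact ⟨a, ha, hAc⟩
  obtain ⟨c, hcF, hcd⟩ := hex
  have hcF' := hcF
  rw [hF, Finset.mem_filter, SimpleGraph.mem_neighborFinset] at hcF'
  obtain ⟨hcadj, hxc⟩ := hcF'
  have hcu : c ≠ u := by
    intro h; rw [h] at hcd; omega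
  refine ⟨?_, ?_, ?_⟩
  · intro u' hu'
    exact parent_val u' hu'.1.symm hu'.2.symm
  · refine ⟨c, ⟨⟨hcadj, hcd⟩, hxc⟩, ?_⟩
    rintro p' ⟨⟨hadj', hd'⟩, hx'⟩
    exact key p' c hadj' hcadj hd'.symm hcd.symm hx' hxc
  · have hFeq : F = {u, c} := by
      apply Finset.ext
      intro w
      constructor
      · intro hwF
        rw [Finset.mem_insert, Finset.mem_singleton]
        rcases hchild_or w hwF with rfl | hwc
        · exact Or.inl rfl
        · refine Or.inr ?_
          have hwF' := hwF
          rw [hF, Finset.mem_filter, SimpleGraph.mem_neighborFinset] at hwF'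
          exact key w c hwF'.1 hcadj hwc.symm hcd.symm hwF'.2 hxc
      · intro hw
        rw [Finset.mem_insert, Finset.mem_singleton] at hw
        rcases hw with rfl | rfl
        · exact huF
        · exact hcF
    rw [hFeq]
    exact Finset.card_pair (Ne.symm hcu)
end

section
/- Let x be a minimal deviation of T with support X. Then the root n belongs to X and the subgraph of T induced on X is connected; hence X is the vertex set of a subtree of T containing the root. -/
/-!
Restrict `x` to the connected component `C` of the root in the subgraph induced on its
support. Every edge at a variable node `p` with `x p = 1` stays inside the support, so a
check node sees either all of its `x`-neighbours in `C` or none of them: the restriction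
is again a codeword. It is nonzero at the root and covered by `x`, so by minimality it is
`x` itself, i.e. the whole support lies in `C`. Acyclicity is inherited from `T`.
-/

open SimpleGraph Finset

section Codewords

variable {V : Type} {T : SimpleGraph V} {P : Set V} {x : V → ZMod 2}

theorem IsCodeword.mem_support_of_adj [Fintype V] [DecidableRel T.Adj]
    (hx : IsCodeword T P x) (hbip : ∀ u v, T.Adj u v → (u ∈ P ↔ v ∉ P))
    {u v : V} (h : T.Adj u v) (hv : x v = 1) :
    u ∈ Support T P x ∧ v ∈ Support T P x := by
  have hvP : v ∈ P := by
    by_contra hvP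
    exact one_ne_zero (hv.symm.trans (hx.1 v hvP))
  have huP : u ∉ P := fun huP => (hbip u v h).1 huP hvP
  exact ⟨Or.inr ⟨huP, v, hvP, h, hv⟩, Or.inl ⟨hvP, hv⟩⟩

theorem IsCodeword.indicator [Fintype V] [DecidableRel T.Adj] (hx : IsCodeword T P x)
    {C : Set V} (hC : ∀ u v, T.Adj u v → x v = 1 → (u ∈ C ↔ v ∈ C)) :
    IsCodeword T P (C.indicator x) := by
  refine ⟨fun v hv => by simp [hx.1 v hv], fun q hq => ?_⟩
  have hnbr : ∀ p ∈ T.neighborFinset q, x p = 1 → (p ∈ C ↔ q ∈ C) := fun p hp h1 =>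
    (hC q p ((mem_neighborFinset T q p).1 hp) h1).symm
  have hzmod2 : ∀ a : ZMod 2, a = 0 ∨ a = 1 := by decide
  by_cases hqC : q ∈ C
  · calc ∑ p ∈ T.neighborFinset q, C.indicator x p = ∑ p ∈ T.neighborFinset q, x p := by
          refine sum_congr rfl fun p hp => ?_
          rcases hzmod2 (x p) with h0 | h1
          · simp [h0]
          · exact Set.indicator_of_mem ((hnbr p hp h1).2 hqC) x
      _ = 0 := hx.2 q hq
  · refine sum_eq_zero fun p hp => ?_
    rcases hzmod2 (x p) with h0 | h1
    · simp [h0]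
    · exact Set.indicator_of_notMem (mt (hnbr p hp h1).1 hqC) x

theorem covers_indicator (C : Set V) : Covers P x (C.indicator x) := by
  intro p _ hp
  by_cases hpC : p ∈ C <;> simp_all

theorem IsMinimalDeviation.mem_of_adj_closed [Fintype V] [DecidableRel T.Adj] {n : V}
    (hx : IsMinimalDeviation T P n x) {C : Set V}
    (hC : ∀ u v, T.Adj u v → x v = 1 → (u ∈ C ↔ v ∈ C)) (hnC : n ∈ C)
    {v : V} (hv : x v = 1) : v ∈ C := by
  obtain ⟨hcode, hxn, hmin⟩ := hx
  have hne : C.indicator x ≠ 0 := fun h => by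
    simpa [Set.indicator_of_mem hnC, hxn] using congrFun h n
  have heq := hmin _ (hcode.indicator hC) (covers_indicator C) hne
  by_contra hvC
  have := congrFun heq v
  rw [Set.indicator_of_notMem hvC, hv] at this
  exact zero_ne_one this

end Codewords

/-- if `x` is a minimal deviation with support `X`, then the root `n`
belongs to `X` and the subgraph of `T` induced on `X` is connected; hence `X` is the
vertex set of a subtree of `T` containing the root. -/
theorem minimal_deviation_support_connected {V : Type} [Fintype V]
    (T : SimpleGraph V) [DecidableRel T.Adj] (hT : T.IsTree)
    (P : Set V) (hbip : ∀ u v, T.Adj u v → (u ∈ P ↔ v ∉ P))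
    (n : V) (hn : n ∈ P)
    (x : V → ZMod 2) (hx : IsMinimalDeviation T P n x) :
    n ∈ Support T P x ∧ (T.induce (Support T P x)).Connected ∧
      (T.induce (Support T P x)).IsTree := by
  set X := Support T P x
  have hnX : n ∈ X := Or.inl ⟨hn, hx.2.1⟩
  set C : Set V := {v | ∃ h : v ∈ X, (T.induce X).Reachable ⟨n, hnX⟩ ⟨v, h⟩}
  have hC : ∀ u v, T.Adj u v → x v = 1 → (u ∈ C ↔ v ∈ C) := by
    intro u v h hv
    obtain ⟨hu, hv'⟩ := hx.1.mem_support_of_adj hbip h hv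
    exact ⟨fun ⟨_, r⟩ => ⟨hv', r.trans (Adj.reachable (G := T.induce X) h)⟩,
      fun ⟨_, r⟩ => ⟨hu, r.trans (Adj.reachable (G := T.induce X) h.symm)⟩⟩
  have hXC : ∀ v ∈ X, v ∈ C := by
    have hnC : n ∈ C := ⟨hnX, .refl _⟩
    rintro v (⟨-, hv⟩ | ⟨-, p, -, hvp, hp⟩)
    · exact hx.mem_of_adj_closed hC hnC hv
    · exact (hC v p hvp hp).2 (hx.mem_of_adj_closed hC hnC hp)
  have hconn : (T.induce X).Connected := by
    have : Nonempty X := ⟨⟨n, hnX⟩⟩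
    refine Connected.mk fun a b => ?_
    obtain ⟨_, ha⟩ := hXC a a.2
    obtain ⟨_, hb⟩ := hXC b b.2
    exact ha.symm.trans hb
  exact ⟨hnX, hconn, hconn, hT.isAcyclic.induce X⟩
end

section
/- A set X of vertices of T is the support of some minimal deviation of T if and only if the following four conditions hold: (i) n ∈ X; (ii) every vertex of X other than n has its parent in X; (iii) every variable node belonging to X has all of its child check nodes in X; (iv) every check node belonging to X has exactly one of its child variable nodes in X. -/
open SimpleGraph Finset

/-!
If `X` is a minimal subtree, the indicator of its variable nodes is a codeword with support `X`.
It is minimal: the check equation at a check node `q ∈ X` involves exactly two variable nodes of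
`X`, the parent of `q` and its unique child in `X`, so any nonzero codeword it covers is constant
on the variable nodes of `X`, hence equal to it.

Conversely, for a codeword `x` with `x n = 1`, the parity check at a check node whose parent
carries a `1` forces some child to carry a `1`. Selecting one such child below every check node
reached from `n` yields a minimal subtree whose indicator is a nonzero codeword covered by `x`; if
`x` is a minimal deviation, it is that indicator.
-/

open Relation

namespace SimpleGraph

variable {V : Type} {T : SimpleGraph V} {n u v w : V}

lemma not_isChild_root : ¬ IsChild T n u n := by
  simp [IsChild]

lemma IsTree.isChild_or_isChild_of_adj (hT : T.IsTree) (h : T.Adj u v) :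
    IsChild T n u v ∨ IsChild T n v u := by
  simp only [IsChild, T.dist_comm (v := n)]
  rcases hT.dist_eq_dist_add_one_of_adj n h with h' | h'
  · exact Or.inr ⟨h.symm, h'⟩
  · exact Or.inl ⟨h, h'⟩

lemma IsTree.exists_isChild_of_ne (hT : T.IsTree) (hv : v ≠ n) : ∃ u, IsChild T n u v := by
  obtain ⟨p, hp⟩ := hT.connected.exists_walk_length_eq_dist v n
  cases p with
  | nil => exact absurd rfl hv
  | cons h p =>
    refine ⟨_, h.symm, ?_⟩
    rcases hT.isChild_or_isChild_of_adj (n := n) h with hc | hc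
    · have := T.dist_le p
      have := hc.2
      rw [Walk.length_cons] at hp
      omega
    · exact hc.2

lemma IsChild.isPath_cons (h : IsChild T n u v) (p : T.Walk u n)
    (hp : p.length = T.dist u n) : (Walk.cons h.1.symm p).IsPath :=
  Walk.isPath_of_length_eq_dist _ (by rw [Walk.length_cons, hp, h.2])

lemma IsChild.unique (hT : T.IsTree) {u₁ u₂ : V} (h₁ : IsChild T n u₁ v)
    (h₂ : IsChild T n u₂ v) : u₁ = u₂ := by
  obtain ⟨p₁, hp₁⟩ := hT.connected.exists_walk_length_eq_dist u₁ n
  obtain ⟨p₂, hp₂⟩ := hT.connected.exists_walk_length_eq_dist u₂ n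
  have := (hT.isAcyclic.subsingleton_path v n).elim ⟨_, h₁.isPath_cons p₁ hp₁⟩
    ⟨_, h₂.isPath_cons p₂ hp₂⟩
  simpa using congrArg (fun p : T.Path v n => p.1.snd) this

lemma reflTransGen_isChild_root_iff : ReflTransGen (IsChild T n) w n ↔ w = n := by
  rw [ReflTransGen.cases_tail_iff]
  simp [not_isChild_root, eq_comm]

lemma IsChild.reflTransGen_iff (hT : T.IsTree) (h : IsChild T n u v) :
    ReflTransGen (IsChild T n) w v ↔ w = v ∨ ReflTransGen (IsChild T n) w u := by
  rw [ReflTransGen.cases_tail_iff]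
  refine or_congr eq_comm ⟨?_, fun hw => ⟨u, hw, h⟩⟩
  rintro ⟨u', hw, h'⟩
  rwa [h'.unique hT h] at hw

lemma IsChild.isChild_iff_mem_erase [Fintype V] [DecidableRel T.Adj] [DecidableEq V]
    (hT : T.IsTree) (h : IsChild T n u v) :
    IsChild T n v w ↔ w ∈ (T.neighborFinset v).erase u := by
  rw [mem_erase, mem_neighborFinset]
  refine ⟨fun hw => ⟨fun e => ?_, hw.1⟩, fun ⟨hwu, hw⟩ => ?_⟩
  · have := hw.2; have := h.2; subst e; omega
  · exact (hT.isChild_or_isChild_of_adj hw).resolve_right fun hw' => hwu (hw'.unique hT h)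

end SimpleGraph

section

lemma ZMod.two_ne_zero_iff_eq_one (a : ZMod 2) : a ≠ 0 ↔ a = 1 := by
  revert a; decide

variable {V : Type} {T : SimpleGraph V} {P : Set V} {n : V} {x : V → ZMod 2} {ch : V → V}

structure IsMinimalSubtree_s3 (T : SimpleGraph V) (P : Set V) (n : V) (X : Set V) : Prop where
  root_mem : n ∈ X
  parent_mem : ∀ v ∈ X, v ≠ n → ∀ u, IsChild T n u v → u ∈ X
  child_mem : ∀ p ∈ X, p ∈ P → ∀ q, IsChild T n p q → q ∉ P → q ∈ X
  existsUnique_child : ∀ q ∈ X, q ∉ P → ∃! p, IsChild T n q p ∧ p ∈ P ∧ p ∈ X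

lemma isMinimalSubtree_iff {X : Set V} :
    IsMinimalSubtree_s3 T P n X ↔
      (n ∈ X ∧
       (∀ v ∈ X, v ≠ n → ∀ u, IsChild T n u v → u ∈ X) ∧
       (∀ p ∈ X, p ∈ P → ∀ q, IsChild T n p q → q ∉ P → q ∈ X) ∧
       (∀ q ∈ X, q ∉ P → ∃! p, IsChild T n q p ∧ p ∈ P ∧ p ∈ X)) :=
  ⟨fun ⟨h₁, h₂, h₃, h₄⟩ => ⟨h₁, h₂, h₃, h₄⟩,
    fun ⟨h₁, h₂, h₃, h₄⟩ => ⟨h₁, h₂, h₃, h₄⟩⟩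

lemma IsMinimalSubtree_s3.mem_of_adj (hT : T.IsTree) {X : Set V} (hX : IsMinimalSubtree_s3 T P n X)
    {p q : V} (hp : p ∈ X) (hpP : p ∈ P) (hq : q ∉ P) (h : T.Adj p q) : q ∈ X := by
  rcases hT.isChild_or_isChild_of_adj (n := n) h with hc | hc
  · exact hX.child_mem p hp hpP q hc hq
  · exact hX.parent_mem p hp (fun e => not_isChild_root (e ▸ hc)) q hc

lemma IsMinimalSubtree_s3.support_indicator (hT : T.IsTree)
    (hbip : ∀ u v, T.Adj u v → (u ∈ P ↔ v ∉ P)) (hn : n ∈ P) {X : Set V}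
    (hX : IsMinimalSubtree_s3 T P n X) : Support T P ((X ∩ P).indicator 1) = X := by
  ext v
  simp only [Support, Set.mem_ofPred_eq, Set.indicator_eq_one_iff_mem, Set.mem_inter_iff]
  constructor
  · rintro (⟨-, hv, -⟩ | ⟨hv, p, -, h, hp, hpP⟩)
    · exact hv
    · exact hX.mem_of_adj hT hp hpP hv h.symm
  · intro hv
    by_cases hvP : v ∈ P
    · exact Or.inl ⟨hvP, hv, hvP⟩
    · have hvn : v ≠ n := fun e => hvP (e ▸ hn)
      obtain ⟨u, hu⟩ := hT.exists_isChild_of_ne hvn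
      have huP := (hbip u v hu.1).mpr hvP
      exact Or.inr ⟨hvP, u, huP, hu.1.symm, hX.parent_mem v hv hvn u hu, huP⟩

/-- Keeps `v` iff every variable node `w ≠ n` on the path from `n` to `v` is the selected child
`ch q` of its parent `q` and has `x w = 1`. -/
def selectedSubtree (T : SimpleGraph V) (P : Set V) (n : V) (x : V → ZMod 2)
    (ch : V → V) : Set V :=
  {v | ∀ w ∈ P, ReflTransGen (IsChild T n) w v → ∀ q, IsChild T n q w → x w = 1 ∧ w = ch q}

lemma apply_eq_one_of_mem_selectedSubtree (hT : T.IsTree) (hxn : x n = 1) {v : V}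
    (hv : v ∈ selectedSubtree T P n x ch) (hvP : v ∈ P) : x v = 1 := by
  by_cases hvn : v = n
  · rwa [hvn]
  obtain ⟨q, hq⟩ := hT.exists_isChild_of_ne hvn
  exact (hv v hvP .refl q hq).1

variable [Fintype V] [DecidableRel T.Adj]

lemma IsCodeword.mem_of_ne_zero (hx : IsCodeword T P x) {v : V} (h : x v ≠ 0) :
    v ∈ P :=
  not_not.mp (mt (hx.1 v) h)

lemma IsCodeword.apply_parent_add_sum_children_eq_zero [DecidableEq V]
    (hx : IsCodeword T P x) {u q : V} (hq : q ∉ P) (hu : IsChild T n u q) :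
    x u + ∑ w ∈ (T.neighborFinset q).erase u, x w = 0 := by
  rw [add_sum_erase _ _ ((mem_neighborFinset _ _ _).mpr hu.1.symm)]
  exact hx.2 q hq

lemma IsMinimalSubtree_s3.isCodeword_indicator (hT : T.IsTree)
    (hbip : ∀ u v, T.Adj u v → (u ∈ P ↔ v ∉ P)) (hn : n ∈ P) {X : Set V}
    (hX : IsMinimalSubtree_s3 T P n X) : IsCodeword T P ((X ∩ P).indicator 1) := by
  classical
  refine ⟨fun v hv => Set.indicator_of_notMem (fun h => hv h.2) _, fun q hq => ?_⟩
  by_cases hqX : q ∈ X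
  · have hqn : q ≠ n := fun e => hq (e ▸ hn)
    obtain ⟨u, hu⟩ := hT.exists_isChild_of_ne hqn
    obtain ⟨c, ⟨hc, hcP, hcX⟩, hc_unique⟩ := hX.existsUnique_child q hqX hq
    have hu' : u ∈ X ∩ P := ⟨hX.parent_mem q hqX hqn u hu, (hbip u q hu.1).mpr hq⟩
    have hc' : c ∈ X ∩ P := ⟨hcX, hcP⟩
    rw [← add_sum_erase _ _ ((mem_neighborFinset _ _ _).mpr hu.1.symm),
      sum_eq_single_of_mem c ((hu.isChild_iff_mem_erase hT).mp hc) fun w hw hwc => ?_,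
      Set.indicator_of_mem hu', Set.indicator_of_mem hc']
    · rfl
    · refine Set.indicator_of_notMem (fun hw' => hwc ?_) _
      exact hc_unique w ⟨(hu.isChild_iff_mem_erase hT).mpr hw, hw'.2, hw'.1⟩
  · refine sum_eq_zero fun w hw => Set.indicator_of_notMem (fun hw' => hqX ?_) _
    exact hX.mem_of_adj hT hw'.1 hw'.2 hq ((mem_neighborFinset _ _ _).mp hw).symm

lemma IsMinimalSubtree_s3.exists_lt_apply_eq (hT : T.IsTree)
    (hbip : ∀ u v, T.Adj u v → (u ∈ P ↔ v ∉ P)) (hn : n ∈ P) {X : Set V}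
    (hX : IsMinimalSubtree_s3 T P n X) {y : V → ZMod 2} (hy : IsCodeword T P y)
    (hyX : ∀ v, y v ≠ 0 → v ∈ X) {p : V} (hp : p ∈ X) (hpP : p ∈ P) (hpn : p ≠ n) :
    ∃ u ∈ X, u ∈ P ∧ T.dist u n < T.dist p n ∧ y u = y p := by
  classical
  obtain ⟨q, hq⟩ := hT.exists_isChild_of_ne hpn
  have hqP : q ∉ P := fun h => (hbip q p hq.1).mp h hpP
  have hqX := hX.parent_mem p hp hpn q hq
  have hqn : q ≠ n := fun e => hqP (e ▸ hn)
  obtain ⟨u, hu⟩ := hT.exists_isChild_of_ne hqn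
  have hparity := hy.apply_parent_add_sum_children_eq_zero hqP hu
  rw [sum_eq_single_of_mem p ((hu.isChild_iff_mem_erase hT).mp hq) fun w hw hwp => ?_,
    CharTwo.add_eq_zero] at hparity
  · refine ⟨u, hX.parent_mem q hqX hqn u hu, (hbip u q hu.1).mpr hqP, ?_, hparity⟩
    have := hq.2; have := hu.2; omega
  · by_contra hw0
    exact hwp <| (hX.existsUnique_child q hqX hqP).unique
      ⟨(hu.isChild_iff_mem_erase hT).mpr hw, hy.mem_of_ne_zero hw0, hyX w hw0⟩ ⟨hq, hpP, hp⟩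

lemma IsMinimalSubtree_s3.apply_eq_apply_root (hT : T.IsTree)
    (hbip : ∀ u v, T.Adj u v → (u ∈ P ↔ v ∉ P)) (hn : n ∈ P) {X : Set V}
    (hX : IsMinimalSubtree_s3 T P n X) {y : V → ZMod 2} (hy : IsCodeword T P y)
    (hyX : ∀ v, y v ≠ 0 → v ∈ X) (p : V) (hp : p ∈ X) (hpP : p ∈ P) : y p = y n := by
  induction hd : T.dist p n using Nat.strong_induction_on generalizing p with
  | _ d ih =>
    by_cases hpn : p = n
    · rw [hpn]
    obtain ⟨u, hu, huP, hlt, hyu⟩ := hX.exists_lt_apply_eq hT hbip hn hy hyX hp hpP hpn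
    rw [← hyu]
    exact ih _ (hd ▸ hlt) u hu huP rfl

lemma IsMinimalSubtree_s3.eq_indicator_of_covers (hT : T.IsTree)
    (hbip : ∀ u v, T.Adj u v → (u ∈ P ↔ v ∉ P)) (hn : n ∈ P) {X : Set V}
    (hX : IsMinimalSubtree_s3 T P n X) {y : V → ZMod 2} (hy : IsCodeword T P y)
    (hcov : Covers P ((X ∩ P).indicator 1) y) (hy0 : y ≠ 0) : y = (X ∩ P).indicator 1 := by
  have hyX : ∀ v, y v ≠ 0 → v ∈ X ∩ P := fun v hv =>
    (Set.indicator_eq_one_iff_mem _).mp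
      (hcov v (hy.mem_of_ne_zero hv) ((ZMod.two_ne_zero_iff_eq_one _).mp hv))
  have hy_const := hX.apply_eq_apply_root hT hbip hn hy fun v hv => (hyX v hv).1
  have hyn : y n = 1 := by
    obtain ⟨v, hv⟩ := Function.ne_iff.mp hy0
    rw [← hy_const v (hyX v hv).1 (hyX v hv).2]
    exact (ZMod.two_ne_zero_iff_eq_one _).mp hv
  funext v
  by_cases hv : v ∈ X ∩ P
  · rw [Set.indicator_of_mem hv, hy_const v hv.1 hv.2, hyn, Pi.one_apply]
  · rw [Set.indicator_of_notMem hv]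
    exact not_not.mp (mt (hyX v) hv)

lemma IsMinimalSubtree_s3.isMinimalDeviation_indicator (hT : T.IsTree)
    (hbip : ∀ u v, T.Adj u v → (u ∈ P ↔ v ∉ P)) (hn : n ∈ P) {X : Set V}
    (hX : IsMinimalSubtree_s3 T P n X) : IsMinimalDeviation T P n ((X ∩ P).indicator 1) :=
  ⟨hX.isCodeword_indicator hT hbip hn,
    Set.indicator_of_mem (show n ∈ X ∩ P from ⟨hX.root_mem, hn⟩) 1,
    fun _ hy hcov hy0 => hX.eq_indicator_of_covers hT hbip hn hy hcov hy0⟩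

lemma existsUnique_child_mem_selectedSubtree (hT : T.IsTree)
    (hbip : ∀ u v, T.Adj u v → (u ∈ P ↔ v ∉ P)) (hn : n ∈ P) (hx : IsCodeword T P x)
    (hxn : x n = 1)
    (hch : ∀ q, (∃ c, IsChild T n q c ∧ x c = 1) → IsChild T n q (ch q) ∧ x (ch q) = 1)
    {q : V} (hq : q ∈ selectedSubtree T P n x ch) (hqP : q ∉ P) :
    ∃! p, IsChild T n q p ∧ p ∈ P ∧ p ∈ selectedSubtree T P n x ch := by
  classical
  have hqn : q ≠ n := fun e => hqP (e ▸ hn)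
  obtain ⟨u, hu⟩ := hT.exists_isChild_of_ne hqn
  have hxu : x u = 1 := apply_eq_one_of_mem_selectedSubtree hT hxn
    (fun w hwP hw => hq w hwP (hw.tail hu)) ((hbip u q hu.1).mpr hqP)
  obtain ⟨c, hc, hxc⟩ : ∃ c ∈ (T.neighborFinset q).erase u, x c ≠ 0 := by
    apply exists_ne_zero_of_sum_ne_zero
    have hparity := hx.apply_parent_add_sum_children_eq_zero hqP hu
    rw [CharTwo.add_eq_zero, hxu] at hparity
    exact hparity ▸ one_ne_zero
  obtain ⟨hch_child, hch_one⟩ :=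
    hch q ⟨c, (hu.isChild_iff_mem_erase hT).mpr hc, (ZMod.two_ne_zero_iff_eq_one _).mp hxc⟩
  refine ⟨ch q, ⟨hch_child, hx.mem_of_ne_zero (hch_one ▸ one_ne_zero),
    fun w hwP hw q' hq' => ?_⟩, fun p ⟨hp, hpP, hpX⟩ => (hpX p hpP .refl q hp).2⟩
  rcases (hch_child.reflTransGen_iff hT).mp hw with rfl | hw
  · rw [hq'.unique hT hch_child]
    exact ⟨hch_one, rfl⟩
  · exact hq w hwP hw q' hq'

lemma isMinimalSubtree_selectedSubtree (hT : T.IsTree)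
    (hbip : ∀ u v, T.Adj u v → (u ∈ P ↔ v ∉ P)) (hn : n ∈ P) (hx : IsCodeword T P x)
    (hxn : x n = 1)
    (hch : ∀ q, (∃ c, IsChild T n q c ∧ x c = 1) → IsChild T n q (ch q) ∧ x (ch q) = 1) :
    IsMinimalSubtree_s3 T P n (selectedSubtree T P n x ch) := by
  refine ⟨fun w _ hw q hq => ?_, fun v hv _ u hu w hwP hw => hv w hwP (hw.tail hu),
    fun p hp _ q hq hqP w hwP hw => ?_,
    fun q hq hqP => existsUnique_child_mem_selectedSubtree hT hbip hn hx hxn hch hq hqP⟩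
  · rw [reflTransGen_isChild_root_iff] at hw
    exact absurd (hw ▸ hq) not_isChild_root
  · rcases (hq.reflTransGen_iff hT).mp hw with rfl | hw
    · exact absurd hwP hqP
    · exact hp w hwP hw

lemma IsCodeword.exists_isMinimalSubtree_covered (hT : T.IsTree)
    (hbip : ∀ u v, T.Adj u v → (u ∈ P ↔ v ∉ P)) (hn : n ∈ P)
    (hx : IsCodeword T P x) (hxn : x n = 1) :
    ∃ X, IsMinimalSubtree_s3 T P n X ∧ Covers P x ((X ∩ P).indicator 1) := by
  have hsel (q : V) : ∃ c, (∃ c, IsChild T n q c ∧ x c = 1) → IsChild T n q c ∧ x c = 1 := by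
    by_cases h : ∃ c, IsChild T n q c ∧ x c = 1
    · exact h.imp fun c hc _ => hc
    · exact ⟨q, fun h' => absurd h' h⟩
  choose ch hch using hsel
  refine ⟨_, isMinimalSubtree_selectedSubtree hT hbip hn hx hxn hch, fun p hpP hp => ?_⟩
  exact apply_eq_one_of_mem_selectedSubtree hT hxn ((Set.indicator_eq_one_iff_mem _).mp hp).1 hpP

lemma IsMinimalDeviation.exists_isMinimalSubtree_eq_indicator (hT : T.IsTree)
    (hbip : ∀ u v, T.Adj u v → (u ∈ P ↔ v ∉ P)) (hn : n ∈ P)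
    (hx : IsMinimalDeviation T P n x) :
    ∃ X, IsMinimalSubtree_s3 T P n X ∧ x = (X ∩ P).indicator 1 := by
  obtain ⟨hx, hxn, hmin⟩ := hx
  obtain ⟨X, hX, hcov⟩ := hx.exists_isMinimalSubtree_covered hT hbip hn hxn
  have hX_dev := hX.isMinimalDeviation_indicator hT hbip hn
  have hX_ne : (X ∩ P).indicator 1 ≠ (0 : V → ZMod 2) := fun h => by
    simpa [h] using hX_dev.2.1
  exact ⟨X, hX, (hmin _ hX_dev.1 hcov hX_ne).symm⟩

end

/-- a set `X` of vertices of `T` is the support of some minimal deviation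
of `T` if and only if: (i) `n ∈ X`; (ii) every vertex of `X` other than `n` has its
parent in `X`; (iii) every variable node of `X` has all of its child check nodes in
`X`; (iv) every check node of `X` has exactly one of its child variable nodes in `X`. -/
theorem support_eq_iff_minimal_subtree {V : Type} [Fintype V]
    (T : SimpleGraph V) [DecidableRel T.Adj] (hT : T.IsTree)
    (P : Set V) (hbip : ∀ u v, T.Adj u v → (u ∈ P ↔ v ∉ P))
    (n : V) (hn : n ∈ P) (X : Set V) :
    (∃ x, IsMinimalDeviation T P n x ∧ Support T P x = X) ↔
      (n ∈ X ∧
       (∀ v ∈ X, v ≠ n → ∀ u, IsChild T n u v → u ∈ X) ∧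
       (∀ p ∈ X, p ∈ P → ∀ q, IsChild T n p q → q ∉ P → q ∈ X) ∧
       (∀ q ∈ X, q ∉ P → ∃! p, IsChild T n q p ∧ p ∈ P ∧ p ∈ X)) := by
  rw [← isMinimalSubtree_iff]
  constructor
  · rintro ⟨x, hx, rfl⟩
    obtain ⟨X', hX', rfl⟩ := hx.exists_isMinimalSubtree_eq_indicator hT hbip hn
    rwa [hX'.support_indicator hT hbip hn]
  · intro hX
    exact ⟨_, hX.isMinimalDeviation_indicator hT hbip hn, hX.support_indicator hT hbip hn⟩
end

section
/- The map sending a minimal deviation of T to its support is injective, and its image is exactly the set of minimal subtrees of T; hence it defines a one-to-one correspondence between the set of minimal deviations of T and the set of minimal subtrees of T. -/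
open SimpleGraph Finset

/-- A minimal subtree of `T`: a set `X` of vertices such that (i) `n ∈ X`;
(ii) every vertex of `X` other than `n` has its parent in `X`; (iii) every variable
node of `X` has all of its child check nodes in `X`; (iv) every check node of `X` has
exactly one of its child variable nodes in `X`. -/
def IsMinimalSubtree {V : Type} (T : SimpleGraph V) (P : Set V) (n : V)
    (X : Set V) : Prop :=
  n ∈ X ∧
  (∀ v ∈ X, v ≠ n → ∀ u, IsChild T n u v → u ∈ X) ∧
  (∀ p ∈ X, p ∈ P → ∀ q, IsChild T n p q → q ∉ P → q ∈ X) ∧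
  (∀ q ∈ X, q ∉ P → ∃! p, IsChild T n q p ∧ p ∈ P ∧ p ∈ X)

section Aux
variable {V : Type} {T : SimpleGraph V} {P : Set V} {n : V}

lemma zmod2_cases (a : ZMod 2) : a = 0 ∨ a = 1 := by
  fin_cases a
  · exact Or.inl rfl
  · exact Or.inr rfl

open Classical in
lemma walk_length_parity (hbip : ∀ u v, T.Adj u v → (u ∈ P ↔ v ∉ P))
    {u v : V} (w : T.Walk u v) :
    (w.length : ZMod 2) = (if u ∈ P then 0 else 1) - (if v ∈ P then 0 else 1) := by
  induction w with
  | nil => simp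
  | @cons a b c h p ih =>
    have hd : (if a ∈ P then (0:ZMod 2) else 1) - (if b ∈ P then 0 else 1) = 1 := by
      have := hbip a b h
      by_cases ha : a ∈ P
      · simp [ha, this.mp ha]
      · have hb : b ∈ P := by by_contra hb; exact ha (this.mpr hb)
        simp [ha, hb]
    rw [SimpleGraph.Walk.length_cons]
    push_cast
    rw [ih]
    linear_combination -hd

lemma adj_parent_or_child (hT : T.IsTree) (hbip : ∀ u v, T.Adj u v → (u ∈ P ↔ v ∉ P))
    {u v : V} (h : T.Adj u v) : IsChild T n u v ∨ IsChild T n v u := by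
  classical
  have hconn := hT.isConnected
  have h1 : T.dist v n ≤ T.dist u n + 1 := by
    calc T.dist v n ≤ T.dist v u + T.dist u n := hconn.dist_triangle
    _ = T.dist u n + 1 := by rw [SimpleGraph.dist_eq_one_iff_adj.mpr h.symm]; omega
  have h2 : T.dist u n ≤ T.dist v n + 1 := by
    calc T.dist u n ≤ T.dist u v + T.dist v n := hconn.dist_triangle
    _ = T.dist v n + 1 := by rw [SimpleGraph.dist_eq_one_iff_adj.mpr h]; omega
  have hne : T.dist u n ≠ T.dist v n := by
    intro heq
    obtain ⟨wu, hwu⟩ := hconn.exists_walk_length_eq_dist u n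
    obtain ⟨wv, hwv⟩ := hconn.exists_walk_length_eq_dist v n
    have pu := walk_length_parity hbip wu
    have pv := walk_length_parity hbip wv
    rw [hwu] at pu; rw [hwv] at pv
    rw [heq, pv] at pu
    have hsu : (if u ∈ P then (0:ZMod 2) else 1) = (if v ∈ P then 0 else 1) :=
      (sub_left_inj.mp pu).symm
    have := hbip u v h
    by_cases hu : u ∈ P
    · have hv : v ∉ P := this.mp hu
      simp [hu, hv] at hsu
    · have hv : v ∈ P := by by_contra hv; exact hu (this.mpr hv)
      simp [hu, hv] at hsu
  rcases Nat.lt_or_ge (T.dist u n) (T.dist v n) with hlt | hge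
  · exact Or.inl ⟨h, by omega⟩
  · have : T.dist v n < T.dist u n := lt_of_le_of_ne hge (fun e => hne e.symm)
    exact Or.inr ⟨h.symm, by omega⟩

lemma exists_parent (hT : T.IsTree) {v : V} (hv : v ≠ n) : ∃ u, IsChild T n u v := by
  have hconn := hT.isConnected
  have hd : T.dist v n ≠ 0 := by
    intro h0
    exact hv (hconn.dist_eq_zero_iff.mp h0)
  obtain ⟨w, hw⟩ := hconn.exists_walk_length_eq_dist v n
  cases w with
  | nil => simp at hw; simp at hd
  | @cons _ u _ h p =>
    refine ⟨u, h.symm, ?_⟩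
    rw [SimpleGraph.Walk.length_cons] at hw
    have h1 : T.dist u n ≤ p.length := SimpleGraph.dist_le p
    have h2 : T.dist v n ≤ T.dist v u + T.dist u n := hconn.dist_triangle
    rw [SimpleGraph.dist_eq_one_iff_adj.mpr h] at h2
    omega

lemma child_ne_root {u v : V} (h : IsChild T n u v) : v ≠ n := by
  intro hv
  subst hv
  have := h.2
  simp [SimpleGraph.dist_self] at this

lemma parent_unique (hT : T.IsTree) {u u' v : V}
    (h : IsChild T n u v) (h' : IsChild T n u' v) : u = u' := by
  have hconn := hT.isConnected
  obtain ⟨pu, hpu⟩ := hconn.exists_walk_length_eq_dist u n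
  obtain ⟨pu', hpu'⟩ := hconn.exists_walk_length_eq_dist u' n
  have hd2 := h.2
  have hd2' := h'.2
  have hd : T.dist u n = T.dist u' n := by omega
  have hw : (SimpleGraph.Walk.cons h.1.symm pu).length = T.dist v n := by
    simp [SimpleGraph.Walk.length_cons, hpu, h.2]
  have hw' : (SimpleGraph.Walk.cons h'.1.symm pu').length = T.dist v n := by
    simp [SimpleGraph.Walk.length_cons, hpu', h'.2]
  have hp : (SimpleGraph.Walk.cons h.1.symm pu).IsPath :=
    SimpleGraph.Walk.isPath_of_length_eq_dist _ hw
  have hp' : (SimpleGraph.Walk.cons h'.1.symm pu').IsPath :=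
    SimpleGraph.Walk.isPath_of_length_eq_dist _ hw'
  obtain ⟨w, -, huniq⟩ := hT.existsUnique_path v n
  have e1 := huniq _ hp
  have e2 := huniq _ hp'
  have : SimpleGraph.Walk.cons h.1.symm pu = SimpleGraph.Walk.cons h'.1.symm pu' := by
    rw [e1, e2]
  have := congrArg (fun w => SimpleGraph.Walk.getVert w 1) this
  simpa using this

lemma exists_other_one {s : Finset V} {f : V → ZMod 2}
    (h0 : ∑ p ∈ s, f p = 0) {p : V} (hp : p ∈ s) (hfp : f p = 1) :
    ∃ r ∈ s, r ≠ p ∧ f r = 1 := by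
  by_contra h
  push_neg at h
  have : ∑ q ∈ s, f q = f p := by
    apply Finset.sum_eq_single_of_mem p hp
    intro b hb hbp
    rcases zmod2_cases (f b) with h1 | h1
    · exact h1
    · exact absurd h1 (h b hb hbp)
  rw [h0, hfp] at this
  exact absurd this (by decide)

end Aux

/-- Auxiliary: the "selected" sub-codeword determined by a choice function `c`. -/
inductive Sel {V : Type} (T : SimpleGraph V) (P : Set V) (n : V) (c : V → V) : V → Prop
  | root : Sel T P n c n
  | step {p q : V} : Sel T P n c p → IsChild T n p q → q ∉ P → Sel T P n c (c q)

lemma deviation_support_subtree {V : Type} [Fintype V] {T : SimpleGraph V}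
    [DecidableRel T.Adj] (hT : T.IsTree) {P : Set V}
    (hbip : ∀ u v, T.Adj u v → (u ∈ P ↔ v ∉ P)) {n : V} (hn : n ∈ P)
    {x : V → ZMod 2} (hx : IsMinimalDeviation T P n x) :
    IsMinimalSubtree T P n (Support T P x) := by
  classical
  obtain ⟨⟨hx0, hxsum⟩, hxn, hmin⟩ := hx
  set c : V → V := fun q => if h : ∃ p, IsChild T n q p ∧ x p = 1 then h.choose else q
    with hc_def
  have hc : ∀ q, (∃ p, IsChild T n q p ∧ x p = 1) → IsChild T n q (c q) ∧ x (c q) = 1 := by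
    intro q h
    simp only [hc_def, dif_pos h]
    exact h.choose_spec
  have hstep : ∀ p q, x p = 1 → IsChild T n p q → q ∉ P →
      ∃ r, IsChild T n q r ∧ x r = 1 := by
    intro p q hxp hpq hq
    have hsum := hxsum q hq
    have hpmem : p ∈ T.neighborFinset q := by
      rw [SimpleGraph.mem_neighborFinset]; exact hpq.1.symm
    obtain ⟨r, hrmem, hrp, hxr⟩ := exists_other_one hsum hpmem hxp
    rw [SimpleGraph.mem_neighborFinset] at hrmem
    rcases adj_parent_or_child (n := n) hT hbip hrmem with h1 | h1
    · exact ⟨r, h1, hxr⟩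
    · exact absurd (parent_unique hT h1 hpq) hrp
  have hinv : ∀ v, Sel T P n c v → x v = 1 ∧ v ∈ P ∧
      (v = n ∨ ∃ q u, IsChild T n q v ∧ q ∉ P ∧ IsChild T n u q ∧ Sel T P n c u ∧
        v = c q) := by
    intro v hv
    induction hv with
    | root => exact ⟨hxn, hn, Or.inl rfl⟩
    | @step p q hp hpq hq ih =>
      obtain ⟨hxp, hpP, -⟩ := ih
      obtain ⟨h1, h2⟩ := hc q (hstep p q hxp hpq hq)
      refine ⟨h2, ?_, Or.inr ⟨q, p, h1, hq, hpq, hp, rfl⟩⟩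
      have := hbip q (c q) h1.1
      by_contra hcq; exact hq (this.mpr hcq)
  have huniqchild : ∀ q r r', IsChild T n q r → IsChild T n q r' →
      Sel T P n c r → Sel T P n c r' → r = r' := by
    have key : ∀ q s, IsChild T n q s → Sel T P n c s → s = c q := by
      intro q s hs hsel
      rcases (hinv s hsel).2.2 with rfl | ⟨q1, u1, hq1, -, -, -, hceq⟩
      · exact absurd rfl (child_ne_root hs)
      · obtain rfl := parent_unique hT hq1 hs
        exact hceq
    intro q r r' h1 h2 hr hr'
    rw [key q r h1 hr, key q r' h2 hr']
  set y : V → ZMod 2 := fun v => if Sel T P n c v then 1 else 0 with hy_def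
  have hy1 : ∀ v, y v = 1 ↔ Sel T P n c v := by
    intro v
    by_cases h : Sel T P n c v <;> simp [hy_def, h]
  have hycode : IsCodeword T P y := by
    constructor
    · intro v hv
      simp only [hy_def]
      rw [if_neg]
      intro hsel; exact hv (hinv v hsel).2.1
    · intro q hq
      have hqn : q ≠ n := fun h => hq (h ▸ hn)
      obtain ⟨u, hu⟩ := exists_parent hT hqn
      have hsum_card : ∑ r ∈ T.neighborFinset q, y r
          = (((T.neighborFinset q).filter (fun r => Sel T P n c r)).card : ZMod 2) := by
        simp only [hy_def]
        rw [Finset.sum_boole]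
      by_cases hselu : Sel T P n c u
      · have hxu : x u = 1 := (hinv u hselu).1
        obtain ⟨hcq1, hcq2⟩ := hc q (hstep u q hxu hu hq)
        have hselc : Sel T P n c (c q) := Sel.step hselu hu hq
        have hne : u ≠ c q := by
          intro h
          have d1 := hu.2
          have d2 := hcq1.2
          rw [← h] at d2
          omega
        have hfilter : (T.neighborFinset q).filter (fun r => Sel T P n c r)
            = {u, c q} := by
          ext r
          simp only [Finset.mem_filter, SimpleGraph.mem_neighborFinset, Finset.mem_insert,
            Finset.mem_singleton]
          constructor
          · rintro ⟨hadj, hsel⟩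
            rcases adj_parent_or_child (n := n) hT hbip hadj with h1 | h1
            · exact Or.inr (huniqchild q r (c q) h1 hcq1 hsel hselc)
            · exact Or.inl (parent_unique hT h1 hu)
          · rintro (rfl | rfl)
            · exact ⟨hu.1.symm, hselu⟩
            · exact ⟨hcq1.1, hselc⟩
        rw [hsum_card, hfilter,
          Finset.card_insert_of_notMem (by simpa using hne), Finset.card_singleton]
        decide
      · have hfilter : (T.neighborFinset q).filter (fun r => Sel T P n c r) = ∅ := by
          ext r
          simp only [Finset.mem_filter, SimpleGraph.mem_neighborFinset,
            Finset.notMem_empty, iff_false, not_and]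
          intro hadj hsel
          rcases adj_parent_or_child (n := n) hT hbip hadj with h1 | h1
          · rcases (hinv r hsel).2.2 with rfl | ⟨q1, u1, hq1, -, hu1, hselu1, -⟩
            · exact child_ne_root h1 rfl
            · obtain rfl := parent_unique hT hq1 h1
              obtain rfl := parent_unique hT hu1 hu
              exact hselu hselu1
          · obtain rfl := parent_unique hT h1 hu
            exact hselu hsel
        rw [hsum_card, hfilter]
        simp
  have hyx : y = x := by
    apply hmin y hycode
    · intro p hp hyp
      exact (hinv p ((hy1 p).mp hyp)).1
    · intro h0
      have h1 : y n = 1 := (hy1 n).mpr Sel.root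
      rw [h0] at h1
      exact absurd h1 (by simp)
  have hx1 : ∀ v, x v = 1 ↔ Sel T P n c v := by
    intro v; rw [← hyx]; exact hy1 v
  refine ⟨Or.inl ⟨hn, hxn⟩, ?_, ?_, ?_⟩
  · -- (ii) parents
    intro v hv hvn u hu
    rcases hv with ⟨hvP, hxv⟩ | ⟨hvP, p, hpP, hadj, hxp⟩
    · rcases (hinv v ((hx1 v).mp hxv)).2.2 with rfl | ⟨q1, u1, hq1, hq1P, -, -, -⟩
      · exact absurd rfl hvn
      · obtain rfl := parent_unique hT hq1 hu
        exact Or.inr ⟨hq1P, v, hvP, hq1.1, hxv⟩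
    · have huP : u ∈ P := (hbip u v hu.1).mpr hvP
      rcases adj_parent_or_child (n := n) hT hbip hadj with h1 | h1
      · rcases (hinv p ((hx1 p).mp hxp)).2.2 with rfl | ⟨q1, u1, hq1, -, hu1, hselu1, -⟩
        · exact absurd rfl (child_ne_root h1)
        · obtain rfl := parent_unique hT hq1 h1
          obtain rfl := parent_unique hT hu1 hu
          exact Or.inl ⟨huP, (hx1 u1).mpr hselu1⟩
      · obtain rfl := parent_unique hT h1 hu
        exact Or.inl ⟨huP, hxp⟩
  · -- (iii) check children
    intro p hp hpP q hpq hq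
    rcases hp with ⟨-, hxp⟩ | ⟨hpP', -⟩
    · exact Or.inr ⟨hq, p, hpP, hpq.1.symm, hxp⟩
    · exact absurd hpP hpP'
  · -- (iv) unique child
    intro q hq hqP
    rcases hq with ⟨hqP', -⟩ | ⟨-, p, hpP, hadj, hxp⟩
    · exact absurd hqP' hqP
    · have hselp := (hx1 p).mp hxp
      obtain ⟨r, hr, hxr, hselr⟩ : ∃ r, IsChild T n q r ∧ x r = 1 ∧ Sel T P n c r := by
        rcases adj_parent_or_child (n := n) hT hbip hadj with h1 | h1
        · exact ⟨p, h1, hxp, hselp⟩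
        · obtain ⟨hc1, hc2⟩ := hc q (hstep p q hxp h1 hqP)
          exact ⟨c q, hc1, hc2, Sel.step hselp h1 hqP⟩
      have hrP : r ∈ P := (hinv r hselr).2.1
      refine ⟨r, ⟨hr, hrP, Or.inl ⟨hrP, hxr⟩⟩, ?_⟩
      rintro r' ⟨hr', hr'P, hmem⟩
      have hxr' : x r' = 1 := by
        rcases hmem with ⟨-, h⟩ | ⟨h, -⟩
        · exact h
        · exact absurd hr'P h
      exact huniqchild q r' r hr' hr ((hx1 r').mp hxr') hselr

lemma subtree_deviation {V : Type} [Fintype V] {T : SimpleGraph V}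
    [DecidableRel T.Adj] (hT : T.IsTree) {P : Set V}
    (hbip : ∀ u v, T.Adj u v → (u ∈ P ↔ v ∉ P)) {n : V} (hn : n ∈ P)
    {X : Set V} (hX : IsMinimalSubtree T P n X) {x : V → ZMod 2}
    (hx : ∀ v, x v = 1 ↔ v ∈ X ∧ v ∈ P) :
    IsMinimalDeviation T P n x ∧ Support T P x = X := by
  classical
  obtain ⟨h1, h2, h3, h4⟩ := hX
  have hx0 : ∀ v, ¬(v ∈ X ∧ v ∈ P) → x v = 0 := by
    intro v hv
    rcases zmod2_cases (x v) with h | h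
    · exact h
    · exact absurd ((hx v).mp h) hv
  have hstray : ∀ q, q ∉ X → q ∉ P → ∀ r, T.Adj q r → x r = 0 := by
    intro q hqX hqP r hadj
    apply hx0
    rintro ⟨hrX, hrP⟩
    rcases adj_parent_or_child (n := n) hT hbip hadj with hc | hc
    · exact hqX (h2 r hrX (child_ne_root hc) q hc)
    · exact hqX (h3 r hrX hrP q hc hqP)
  have hxcode : IsCodeword T P x := by
    refine ⟨fun v hv => hx0 v (fun h => hv h.2), ?_⟩
    intro q hqP
    by_cases hqX : q ∈ X
    · have hqn : q ≠ n := fun h => hqP (h ▸ hn)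
      obtain ⟨u, hu⟩ := exists_parent hT hqn
      have huX : u ∈ X := h2 q hqX hqn u hu
      have huP : u ∈ P := (hbip u q hu.1).mpr hqP
      obtain ⟨p0, ⟨hp0c, hp0P, hp0X⟩, hp0u⟩ := h4 q hqX hqP
      have hcongr : ∑ r ∈ T.neighborFinset q, x r
          = ∑ r ∈ T.neighborFinset q, (if x r = 1 then (1:ZMod 2) else 0) := by
        apply Finset.sum_congr rfl
        intro r _
        rcases zmod2_cases (x r) with h | h <;> simp [h]
      rw [hcongr, Finset.sum_boole]
      have hfilter : (T.neighborFinset q).filter (fun r => x r = 1) = {u, p0} := by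
        ext r
        simp only [Finset.mem_filter, SimpleGraph.mem_neighborFinset, Finset.mem_insert,
          Finset.mem_singleton]
        constructor
        · rintro ⟨hadj, hxr⟩
          obtain ⟨hrX, hrP⟩ := (hx r).mp hxr
          rcases adj_parent_or_child (n := n) hT hbip hadj with hcqr | hcrq
          · exact Or.inr (hp0u r ⟨hcqr, hrP, hrX⟩)
          · exact Or.inl (parent_unique hT hcrq hu)
        · rintro (rfl | rfl)
          · exact ⟨hu.1.symm, (hx _).mpr ⟨huX, huP⟩⟩
          · exact ⟨hp0c.1, (hx _).mpr ⟨hp0X, hp0P⟩⟩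
      have hne : u ≠ p0 := by
        intro h
        have d1 := hu.2
        have d2 := hp0c.2
        rw [← h] at d2
        omega
      rw [hfilter, Finset.card_insert_of_notMem (by simpa using hne),
        Finset.card_singleton]
      decide
    · apply Finset.sum_eq_zero
      intro r hr
      rw [SimpleGraph.mem_neighborFinset] at hr
      exact hstray q hqX hqP r hr
  have hmin : ∀ y, IsCodeword T P y → Covers P x y → y ≠ 0 → y = x := by
    rintro y ⟨hy0, hysum⟩ hcov hyne
    have hyX : ∀ v, y v = 1 → v ∈ X ∧ v ∈ P := by
      intro v hv
      have hvP : v ∈ P := by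
        by_contra h
        rw [hy0 v h] at hv
        exact absurd hv (by decide)
      exact ⟨((hx v).mp (hcov v hvP hv)).1, hvP⟩
    have hup : ∀ d, ∀ p, T.dist p n = d → y p = 1 → y n = 1 := by
      intro d
      induction d using Nat.strong_induction_on with
      | _ d IH =>
        intro p hd hyp
        by_cases hpn : p = n
        · rw [← hpn]; exact hyp
        obtain ⟨hpX, hpP⟩ := hyX p hyp
        obtain ⟨q, hq⟩ := exists_parent hT hpn
        have hqP : q ∉ P := fun h => ((hbip q p hq.1).mp h) hpP
        have hqX : q ∈ X := h2 p hpX hpn q hq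
        have hsum := hysum q hqP
        have hpmem : p ∈ T.neighborFinset q := by
          rw [SimpleGraph.mem_neighborFinset]; exact hq.1
        obtain ⟨r, hrmem, hrp, hyr⟩ := exists_other_one hsum hpmem hyp
        rw [SimpleGraph.mem_neighborFinset] at hrmem
        obtain ⟨hrX, hrP⟩ := hyX r hyr
        rcases adj_parent_or_child (n := n) hT hbip hrmem with hcqr | hcrq
        · obtain ⟨p0, -, hp0u⟩ := h4 q hqX hqP
          have e1 := hp0u r ⟨hcqr, hrP, hrX⟩
          have e2 := hp0u p ⟨hq, hpP, hpX⟩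
          exact absurd (e1.trans e2.symm) hrp
        · have hdr : T.dist r n < d := by
            have d1 := hq.2
            have d2 := hcrq.2
            omega
          exact IH _ hdr r rfl hyr
    have hyn : y n = 1 := by
      obtain ⟨v, hv⟩ : ∃ v, y v ≠ 0 := by
        by_contra h; push_neg at h; exact hyne (funext h)
      have hyv : y v = 1 := (zmod2_cases (y v)).resolve_left hv
      exact hup _ v rfl hyv
    have hdown : ∀ d, ∀ p, T.dist p n = d → p ∈ X → p ∈ P → y p = 1 := by
      intro d
      induction d using Nat.strong_induction_on with
      | _ d IH =>
        intro p hd hpX hpP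
        by_cases hpn : p = n
        · rw [hpn]; exact hyn
        obtain ⟨q, hq⟩ := exists_parent hT hpn
        have hqP : q ∉ P := fun h => ((hbip q p hq.1).mp h) hpP
        have hqX : q ∈ X := h2 p hpX hpn q hq
        have hqn : q ≠ n := fun h => hqP (h ▸ hn)
        obtain ⟨u, hu⟩ := exists_parent hT hqn
        have huX : u ∈ X := h2 q hqX hqn u hu
        have huP : u ∈ P := (hbip u q hu.1).mpr hqP
        have hdu : T.dist u n < d := by
          have e1 := hq.2; have e2 := hu.2; omega
        have hyu : y u = 1 := IH _ hdu u rfl huX huP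
        have hsum := hysum q hqP
        have humem : u ∈ T.neighborFinset q := by
          rw [SimpleGraph.mem_neighborFinset]; exact hu.1.symm
        obtain ⟨r, hrmem, hru, hyr⟩ := exists_other_one hsum humem hyu
        rw [SimpleGraph.mem_neighborFinset] at hrmem
        obtain ⟨hrX, hrP⟩ := hyX r hyr
        rcases adj_parent_or_child (n := n) hT hbip hrmem with hcqr | hcrq
        · obtain ⟨p0, -, hp0u⟩ := h4 q hqX hqP
          have e1 := hp0u r ⟨hcqr, hrP, hrX⟩
          have e2 := hp0u p ⟨hq, hpP, hpX⟩
          rw [e1.trans e2.symm] at hyr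
          exact hyr
        · exact absurd (parent_unique hT hcrq hu) hru
    funext v
    by_cases hvP : v ∈ P
    · by_cases hvX : v ∈ X
      · rw [hdown _ v rfl hvX hvP, (hx v).mpr ⟨hvX, hvP⟩]
      · rw [hx0 v (fun h => hvX h.1)]
        rcases zmod2_cases (y v) with h | h
        · exact h
        · exact absurd (hyX v h).1 hvX
    · rw [hy0 v hvP, hx0 v (fun h => hvP h.2)]
  have hsupp : Support T P x = X := by
    ext v
    simp only [Support, Set.mem_setOf_eq]
    constructor
    · rintro (⟨hvP, hxv⟩ | ⟨hvP, p, hpP, hadj, hxp⟩)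
      · exact ((hx v).mp hxv).1
      · by_contra hvX
        rw [hstray v hvX hvP p hadj] at hxp
        exact absurd hxp (by decide)
    · intro hvX
      by_cases hvP : v ∈ P
      · exact Or.inl ⟨hvP, (hx v).mpr ⟨hvX, hvP⟩⟩
      · obtain ⟨p0, ⟨hp0c, hp0P, hp0X⟩, -⟩ := h4 v hvX hvP
        exact Or.inr ⟨hvP, p0, hp0P, hp0c.1, (hx p0).mpr ⟨hp0X, hp0P⟩⟩
  exact ⟨⟨hxcode, (hx n).mpr ⟨h1, hn⟩, hmin⟩, hsupp⟩

/-- the map sending a minimal deviation of `T` to its support is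
injective, and its image is exactly the set of minimal subtrees of `T`; hence it is a
one-to-one correspondence between minimal deviations and minimal subtrees of `T`. -/
theorem minimal_deviation_support_bijection {V : Type} [Fintype V]
    (T : SimpleGraph V) [DecidableRel T.Adj] (hT : T.IsTree)
    (P : Set V) (hbip : ∀ u v, T.Adj u v → (u ∈ P ↔ v ∉ P))
    (n : V) (hn : n ∈ P) :
    (∀ x y, IsMinimalDeviation T P n x → IsMinimalDeviation T P n y →
      Support T P x = Support T P y → x = y) ∧
    (∀ X : Set V, (∃ x, IsMinimalDeviation T P n x ∧ Support T P x = X) ↔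
      IsMinimalSubtree T P n X) := by
  classical
  constructor
  · intro x y hx hy hs
    funext v
    by_cases hvP : v ∈ P
    · have hxiff : x v = 1 ↔ v ∈ Support T P x := by
        constructor
        · intro h; exact Or.inl ⟨hvP, h⟩
        · rintro (⟨-, h⟩ | ⟨h, -⟩)
          · exact h
          · exact absurd hvP h
      have hyiff : y v = 1 ↔ v ∈ Support T P y := by
        constructor
        · intro h; exact Or.inl ⟨hvP, h⟩
        · rintro (⟨-, h⟩ | ⟨h, -⟩)
          · exact h
          · exact absurd hvP h
      rw [hs] at hxiff
      have hiff : x v = 1 ↔ y v = 1 := hxiff.trans hyiff.symm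
      rcases zmod2_cases (x v) with h | h
      · rw [h]
        rcases zmod2_cases (y v) with h' | h'
        · rw [h']
        · have hc := hiff.mpr h'
          rw [h] at hc
          exact absurd hc (by decide)
      · rw [h, hiff.mp h]
    · rw [hx.1.1 v hvP, hy.1.1 v hvP]
  · intro X
    constructor
    · rintro ⟨x, hx, rfl⟩
      exact deviation_support_subtree hT hbip hn hx
    · intro hX
      have hxspec : ∀ v, (fun v => if v ∈ X ∧ v ∈ P then (1:ZMod 2) else 0) v = 1 ↔
          v ∈ X ∧ v ∈ P := by
        intro v
        by_cases h : v ∈ X ∧ v ∈ P <;> simp [h]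
      obtain ⟨hdev, hsupp⟩ := subtree_deviation hT hbip hn hX hxspec
      exact ⟨_, hdev, hsupp⟩
end

section
/- Assume every leaf of T is a variable node (equivalently, every check node of T has at least one child variable node). Then for every variable node p ∈ P there exists a minimal deviation x of T with x_p = 1. -/
open SimpleGraph Finset

/-! Choose for every check node `q` a child `sel q`, taking the child toward `p` whenever `q` is
a proper ancestor of `p`; such a child exists because no check node is a leaf. Let
`S = selectionSubtree T n sel` be the set of variable nodes reached from the root by repeatedly
stepping to a child check node `q` and then to `sel q`. A check node then has either no neighbour
in `S` or exactly two, its parent and `sel q`, so the indicator of `S` is a codeword; it contains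
every variable ancestor of `p`, in particular `p`. A nonzero codeword `y` covered by it vanishes
off `S` and satisfies `y u = y (sel q)` along every step, so it is constant on `S`, hence equal to
the indicator of `S`. -/

section RootedTree

variable {V : Type} {T : SimpleGraph V} {n u v : V}

lemma IsChild.ne_root (h : IsChild T n u v) : v ≠ n := by
  rintro rfl
  simpa using h.2

lemma dist_le_dist_of_reflTransGen_isChild (h : Relation.ReflTransGen (IsChild T n) u v) :
    T.dist u n ≤ T.dist v n := by
  induction h with
  | refl => exact le_rfl
  | tail _ hc ih => rw [hc.2]; omega

lemma SimpleGraph.Connected.exists_isChild (hT : T.Connected) (hv : v ≠ n) :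
    ∃ u, IsChild T n u v := by
  obtain ⟨w, hw⟩ := hT.exists_walk_length_eq_dist v n
  cases w with
  | nil => exact absurd rfl hv
  | @cons _ u _ h w' =>
    refine ⟨u, h.symm, ?_⟩
    have hle := dist_le w'
    have htri : T.dist v n ≤ T.dist v u + T.dist u n := hT.dist_triangle
    rw [dist_eq_one_iff_adj.mpr h] at htri
    rw [Walk.length_cons] at hw
    omega

lemma SimpleGraph.IsTree.isChild_or_isChild_of_adj_s6 (hT : T.IsTree) (h : T.Adj u v) :
    IsChild T n u v ∨ IsChild T n v u := by
  have hd := hT.dist_eq_dist_add_one_of_adj n h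
  rw [dist_comm (u := n), dist_comm (u := n)] at hd
  rcases hd with hd | hd
  · exact .inr ⟨h.symm, hd⟩
  · exact .inl ⟨h, hd⟩

lemma SimpleGraph.IsTree.eq_of_isChild_of_isChild (hT : T.IsTree) {u₁ u₂ : V}
    (h₁ : IsChild T n u₁ v) (h₂ : IsChild T n u₂ v) : u₁ = u₂ := by
  -- A geodesic from a parent to the root, extended by the edge from `v`, is still a geodesic,
  -- hence the unique path from `v` to the root.
  have geodesic : ∀ u (h : IsChild T n u v), ∃ p : T.Walk u n, (p.cons h.1.symm).IsPath := by
    intro u h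
    obtain ⟨p, hp⟩ := hT.connected.exists_walk_length_eq_dist u n
    exact ⟨p, Walk.isPath_of_length_eq_dist _ (by rw [Walk.length_cons, hp, h.2])⟩
  obtain ⟨p₁, hp₁⟩ := geodesic u₁ h₁
  obtain ⟨p₂, hp₂⟩ := geodesic u₂ h₂
  simpa using congrArg Walk.snd ((hT.existsUnique_path v n).unique hp₁ hp₂)

lemma SimpleGraph.IsTree.eq_of_reflTransGen_isChild (hT : T.IsTree) {a b p : V}
    (ha : Relation.ReflTransGen (IsChild T n) a p) (hb : Relation.ReflTransGen (IsChild T n) b p)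
    (hab : T.dist a n = T.dist b n) : a = b := by
  induction ha generalizing b with
  | refl =>
    rcases hb.cases_tail with rfl | ⟨c, hbc, hc⟩
    · rfl
    · have := dist_le_dist_of_reflTransGen_isChild hbc
      have := hc.2
      omega
  | tail hac hcp ih =>
    rcases hb.cases_tail with rfl | ⟨c', hbc', hc'⟩
    · have := dist_le_dist_of_reflTransGen_isChild hac
      have := hcp.2
      omega
    · obtain rfl := hT.eq_of_isChild_of_isChild hcp hc'
      exact ih hbc' hab

end RootedTree

def selectionSubtree {V : Type} (T : SimpleGraph V) (n : V) (sel : V → V) : Set V :=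
  {v | Relation.ReflTransGen (fun u w => ∃ q, IsChild T n u q ∧ w = sel q) n v}

section Selection

variable {V : Type} {T : SimpleGraph V} {P : Set V} {n p : V} {sel : V → V}

lemma root_mem_selectionSubtree : n ∈ selectionSubtree T n sel :=
  Relation.ReflTransGen.refl

lemma selectionSubtree_subset (hbip : ∀ u v, T.Adj u v → (u ∈ P ↔ v ∉ P)) (hn : n ∈ P)
    (hsel : ∀ q ∉ P, IsChild T n q (sel q)) : selectionSubtree T n sel ⊆ P := by
  intro v hv
  induction hv with
  | refl => exact hn
  | tail _ hstep hu =>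
    obtain ⟨q, huq, rfl⟩ := hstep
    have hq : q ∉ P := (hbip _ _ huq.1).1 hu
    exact of_not_not fun hc => hq ((hbip _ _ (hsel q hq).1).2 hc)

lemma isChild_mem_selectionSubtree_iff (hT : T.IsTree)
    (hbip : ∀ u v, T.Adj u v → (u ∈ P ↔ v ∉ P)) (hn : n ∈ P)
    (hsel : ∀ q ∉ P, IsChild T n q (sel q)) {u q c : V}
    (huq : IsChild T n u q) (hqc : IsChild T n q c) :
    c ∈ selectionSubtree T n sel ↔ u ∈ selectionSubtree T n sel ∧ c = sel q := by
  constructor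
  · intro hc
    rcases Relation.ReflTransGen.cases_tail hc with rfl | ⟨u', hu', q', hu'q', rfl⟩
    · exact absurd rfl hqc.ne_root
    · have hq' : q' ∉ P := (hbip _ _ hu'q'.1).1 (selectionSubtree_subset hbip hn hsel hu')
      obtain rfl := hT.eq_of_isChild_of_isChild (hsel q' hq') hqc
      obtain rfl := hT.eq_of_isChild_of_isChild hu'q' huq
      exact ⟨hu', rfl⟩
  · rintro ⟨hu, rfl⟩
    exact Relation.ReflTransGen.tail hu ⟨q, huq, rfl⟩

lemma eq_parent_or_eq_sel_of_adj_mem_selectionSubtree (hT : T.IsTree)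
    (hbip : ∀ u v, T.Adj u v → (u ∈ P ↔ v ∉ P)) (hn : n ∈ P)
    (hsel : ∀ q ∉ P, IsChild T n q (sel q)) {u q w : V} (huq : IsChild T n u q)
    (hw : T.Adj q w) (hwS : w ∈ selectionSubtree T n sel) :
    w = u ∨ (u ∈ selectionSubtree T n sel ∧ w = sel q) := by
  rcases hT.isChild_or_isChild_of_adj_s6 hw with hqw | hwq
  · exact .inr ((isChild_mem_selectionSubtree_iff hT hbip hn hsel huq hqw).1 hwS)
  · exact .inl (hT.eq_of_isChild_of_isChild hwq huq)

lemma mem_selectionSubtree_of_reflTransGen_isChild (hT : T.Connected)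
    (hbip : ∀ u v, T.Adj u v → (u ∈ P ↔ v ∉ P)) (hn : n ∈ P)
    (hsel : ∀ q ∉ P, ∀ c, IsChild T n q c → Relation.ReflTransGen (IsChild T n) c p → sel q = c)
    {v : V} (hv : v ∈ P) (hvp : Relation.ReflTransGen (IsChild T n) v p) :
    v ∈ selectionSubtree T n sel := by
  induction hd : T.dist v n using Nat.strong_induction_on generalizing v with
  | _ d ih =>
  obtain rfl | hvn := eq_or_ne v n
  · exact root_mem_selectionSubtree
  obtain ⟨q, hqv⟩ := hT.exists_isChild hvn
  have hq : q ∉ P := fun h => (hbip _ _ hqv.1).1 h hv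
  obtain ⟨u, huq⟩ := hT.exists_isChild fun h : q = n => hq (h ▸ hn)
  have hu : u ∈ selectionSubtree T n sel := by
    refine ih _ ?_ ((hbip _ _ huq.1).2 hq) (.head huq (.head hqv hvp)) rfl
    have := hqv.2
    have := huq.2
    omega
  exact Relation.ReflTransGen.tail hu ⟨q, huq, (hsel q hq v hqv hvp).symm⟩

lemma exists_selection_toward (hT : T.IsTree) (hchild : ∀ q ∉ P, ∃ c, IsChild T n q c) (p : V) :
    ∃ sel : V → V, ∀ q ∉ P, IsChild T n q (sel q) ∧
      ∀ c, IsChild T n q c → Relation.ReflTransGen (IsChild T n) c p → sel q = c := by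
  have : ∀ q, ∃ s, q ∉ P → IsChild T n q s ∧
      ∀ c, IsChild T n q c → Relation.ReflTransGen (IsChild T n) c p → s = c := by
    intro q
    by_cases hq : q ∈ P
    · exact ⟨q, fun h => absurd hq h⟩
    by_cases htoward : ∃ c, IsChild T n q c ∧ Relation.ReflTransGen (IsChild T n) c p
    · obtain ⟨c, hqc, hcp⟩ := htoward
      exact ⟨c, fun _ => ⟨hqc, fun c' hqc' hc'p =>
        hT.eq_of_reflTransGen_isChild hcp hc'p (by rw [hqc.2, hqc'.2])⟩⟩
    · obtain ⟨c, hqc⟩ := hchild q hq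
      exact ⟨c, fun _ => ⟨hqc, fun c' hqc' hc'p => absurd ⟨c', hqc', hc'p⟩ htoward⟩⟩
  choose sel hsel using this
  exact ⟨sel, hsel⟩

variable [Fintype V] [DecidableRel T.Adj]

lemma sum_neighborFinset_of_parent_mem {M : Type} [AddCommMonoid M] (hT : T.IsTree)
    (hbip : ∀ u v, T.Adj u v → (u ∈ P ↔ v ∉ P)) (hn : n ∈ P)
    (hsel : ∀ q ∉ P, IsChild T n q (sel q)) {u q : V} (huq : IsChild T n u q) (hq : q ∉ P)
    (hu : u ∈ selectionSubtree T n sel) {f : V → M}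
    (hf : ∀ v ∉ selectionSubtree T n sel, f v = 0) :
    ∑ w ∈ T.neighborFinset q, f w = f u + f (sel q) := by
  classical
  have hne : u ≠ sel q := by
    rintro h
    have := (hsel q hq).2
    have := huq.2
    subst h
    omega
  rw [← sum_pair hne]
  refine (sum_subset ?_ fun w hw hw' => hf w fun hwS => ?_).symm
  · simpa [insert_subset_iff] using ⟨huq.1.symm, (hsel q hq).1⟩
  · simp only [mem_insert, mem_singleton, not_or] at hw'
    rcases eq_parent_or_eq_sel_of_adj_mem_selectionSubtree hT hbip hn hsel huq
      ((mem_neighborFinset _ _ _).1 hw) hwS with h | h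
    exacts [hw'.1 h, hw'.2 h.2]

lemma sum_neighborFinset_of_parent_notMem {M : Type} [AddCommMonoid M] (hT : T.IsTree)
    (hbip : ∀ u v, T.Adj u v → (u ∈ P ↔ v ∉ P)) (hn : n ∈ P)
    (hsel : ∀ q ∉ P, IsChild T n q (sel q)) {u q : V} (huq : IsChild T n u q)
    (hu : u ∉ selectionSubtree T n sel) {f : V → M}
    (hf : ∀ v ∉ selectionSubtree T n sel, f v = 0) :
    ∑ w ∈ T.neighborFinset q, f w = 0 := by
  refine sum_eq_zero fun w hw => hf w fun hwS => ?_
  rcases eq_parent_or_eq_sel_of_adj_mem_selectionSubtree hT hbip hn hsel huq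
    ((mem_neighborFinset _ _ _).1 hw) hwS with rfl | h
  exacts [hu hwS, hu h.1]

lemma isCodeword_indicator_selectionSubtree (hT : T.IsTree)
    (hbip : ∀ u v, T.Adj u v → (u ∈ P ↔ v ∉ P)) (hn : n ∈ P)
    (hsel : ∀ q ∉ P, IsChild T n q (sel q)) :
    IsCodeword T P ((selectionSubtree T n sel).indicator 1) := by
  have hf : ∀ v ∉ selectionSubtree T n sel,
      (selectionSubtree T n sel).indicator (1 : V → ZMod 2) v = 0 :=
    fun v hv => Set.indicator_of_notMem hv _
  refine ⟨fun v hv => hf v fun hvS => hv (selectionSubtree_subset hbip hn hsel hvS),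
    fun q hq => ?_⟩
  obtain ⟨u, huq⟩ := hT.connected.exists_isChild fun h : q = n => hq (h ▸ hn)
  by_cases hu : u ∈ selectionSubtree T n sel
  · have hselS := (isChild_mem_selectionSubtree_iff hT hbip hn hsel huq (hsel q hq)).2 ⟨hu, rfl⟩
    rw [sum_neighborFinset_of_parent_mem hT hbip hn hsel huq hq hu hf,
      Set.indicator_of_mem hu, Set.indicator_of_mem hselS, Pi.one_apply, Pi.one_apply,
      CharTwo.add_self_eq_zero]
  · exact sum_neighborFinset_of_parent_notMem hT hbip hn hsel huq hu hf

lemma apply_eq_apply_root_of_isCodeword (hT : T.IsTree)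
    (hbip : ∀ u v, T.Adj u v → (u ∈ P ↔ v ∉ P)) (hn : n ∈ P)
    (hsel : ∀ q ∉ P, IsChild T n q (sel q)) {y : V → ZMod 2} (hy : IsCodeword T P y)
    (hyS : ∀ v ∉ selectionSubtree T n sel, y v = 0) :
    ∀ v ∈ selectionSubtree T n sel, y v = y n := by
  intro v hv
  induction hv with
  | refl => rfl
  | tail hu hstep ih =>
    obtain ⟨q, huq, rfl⟩ := hstep
    have hq : q ∉ P := (hbip _ _ huq.1).1 (selectionSubtree_subset hbip hn hsel hu)
    have hcheck := hy.2 q hq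
    rw [sum_neighborFinset_of_parent_mem hT hbip hn hsel huq hq hu hyS,
      CharTwo.add_eq_zero] at hcheck
    rw [← hcheck, ih]

theorem isMinimalDeviation_indicator_selectionSubtree (hT : T.IsTree)
    (hbip : ∀ u v, T.Adj u v → (u ∈ P ↔ v ∉ P)) (hn : n ∈ P)
    (hsel : ∀ q ∉ P, IsChild T n q (sel q)) :
    IsMinimalDeviation T P n ((selectionSubtree T n sel).indicator 1) := by
  refine ⟨isCodeword_indicator_selectionSubtree hT hbip hn hsel,
    Set.indicator_of_mem root_mem_selectionSubtree _, fun y hy hcov hy0 => ?_⟩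
  have hyS : ∀ v ∉ selectionSubtree T n sel, y v = 0 := by
    intro v hv
    by_contra hyv
    have hvP : v ∈ P := of_not_not fun hvP => hyv (hy.1 v hvP)
    have := hcov v hvP (Fin.eq_one_of_ne_zero _ hyv)
    rw [Set.indicator_of_notMem hv] at this
    exact zero_ne_one this
  have hconst := apply_eq_apply_root_of_isCodeword hT hbip hn hsel hy hyS
  have hyn : y n = 1 := by
    obtain ⟨v, hv⟩ := Function.ne_iff.mp hy0
    have hvS : v ∈ selectionSubtree T n sel := of_not_not fun h => hv (hyS v h)
    rw [← hconst v hvS]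
    exact Fin.eq_one_of_ne_zero _ hv
  funext v
  by_cases hv : v ∈ selectionSubtree T n sel
  · rw [Set.indicator_of_mem hv, hconst v hv, hyn, Pi.one_apply]
  · rw [Set.indicator_of_notMem hv, hyS v hv]

end Selection

/-- assume every leaf of `T` is a variable node (equivalently, every
check node of `T` has at least one child variable node).  Then for every variable node
`p` there exists a minimal deviation `x` of `T` with `x p = 1`. -/
theorem exists_minimal_deviation_through {V : Type} [Fintype V]
    (T : SimpleGraph V) [DecidableRel T.Adj] (hT : T.IsTree)
    (P : Set V) (hbip : ∀ u v, T.Adj u v → (u ∈ P ↔ v ∉ P))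
    (n : V) (hn : n ∈ P)
    (hleaf : ∀ q, q ∉ P → ∃ v, IsChild T n q v ∧ v ∈ P) :
    ∀ p ∈ P, ∃ x, IsMinimalDeviation T P n x ∧ x p = 1 := by
  intro p hp
  obtain ⟨sel, hsel⟩ := exists_selection_toward hT (fun q hq => (hleaf q hq).imp fun _ h => h.1) p
  have hp_mem : p ∈ selectionSubtree T n sel :=
    mem_selectionSubtree_of_reflTransGen_isChild hT.connected hbip hn
      (fun q hq => (hsel q hq).2) hp .refl
  exact ⟨_, isMinimalDeviation_indicator_selectionSubtree hT hbip hn (fun q hq => (hsel q hq).1),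
    Set.indicator_of_mem hp_mem _⟩
end

section
/- Let x be a minimal deviation of T with support X, let q ∈ X be a check node, and let p be the unique child variable node of q with x_p = 1. If p is not a leaf of T, then every child check node of p belongs to X; in particular q has at least one grandchild check node lying in X. -/
open SimpleGraph Finset

/-!
Every child of `p` is a check node adjacent to `p`, where `x` is `1`, so it lies in the support.
For the second claim, a non-leaf `p` has a neighbour other than its parent `q`, and in a tree
that neighbour is a child of `p`: a vertex has only one neighbour closer to the root, because
prepending the edge to a shortest path from such a neighbour gives a shortest, hence the unique,
path to the root.
-/

namespace SimpleGraph.IsTree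

variable {V : Type} {T : SimpleGraph V}

theorem eq_of_adj_of_dist_eq_add_one (hT : T.IsTree) {n p a b : V}
    (ha : T.Adj p a) (hb : T.Adj p b)
    (hda : T.dist p n = T.dist a n + 1) (hdb : T.dist p n = T.dist b n + 1) : a = b := by
  obtain ⟨wa, hwa⟩ := hT.connected.exists_walk_length_eq_dist a n
  obtain ⟨wb, hwb⟩ := hT.connected.exists_walk_length_eq_dist b n
  have hpa : (Walk.cons ha wa).IsPath := Walk.isPath_of_length_eq_dist _ (by simp [hwa, hda])
  have hpb : (Walk.cons hb wb).IsPath := Walk.isPath_of_length_eq_dist _ (by simp [hwb, hdb])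
  simpa using congrArg Walk.snd ((hT.existsUnique_path p n).unique hpa hpb)

theorem isChild_of_adj_of_ne_parent (hT : T.IsTree) {n q p q' : V} (hchild : IsChild T n q p)
    (hadj : T.Adj p q') (hne : q' ≠ q) : IsChild T n p q' := by
  refine ⟨hadj, ?_⟩
  rcases hT.dist_eq_dist_add_one_of_adj n hadj with hup | hdown
  · rw [dist_comm, dist_comm (u := n)] at hup
    exact absurd (hT.eq_of_adj_of_dist_eq_add_one hadj hchild.1.symm hup hchild.2) hne
  · rwa [dist_comm, dist_comm (u := n)] at hdown

theorem exists_isChild_of_degree_ne_one [Fintype V] [DecidableRel T.Adj] (hT : T.IsTree)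
    {n q p : V} (hchild : IsChild T n q p) (hnotleaf : T.degree p ≠ 1) :
    ∃ q', IsChild T n p q' := by
  have hdeg : 1 < (T.neighborFinset p).card := by
    have := (T.degree_pos_iff_exists_adj p).2 ⟨q, hchild.1.symm⟩
    rw [card_neighborFinset_eq_degree]
    omega
  obtain ⟨q', hq', hne⟩ := exists_mem_ne hdeg q
  exact ⟨q', hT.isChild_of_adj_of_ne_parent hchild (by simpa using hq') hne⟩

end SimpleGraph.IsTree

theorem minimal_deviation_descends_general {V : Type} [Fintype V]
    (T : SimpleGraph V) [DecidableRel T.Adj] (hT : T.IsTree)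
    (P : Set V) (hbip : ∀ u v, T.Adj u v → (u ∈ P ↔ v ∉ P))
    (n : V)
    (x : V → ZMod 2)
    (q : V) (hqP : q ∉ P)
    (p : V) (hchild : IsChild T n q p) (hxp : x p = 1)
    (hnotleaf : T.degree p ≠ 1) :
    (∀ q', IsChild T n p q' → q' ∈ Support T P x) ∧
    (∃ q', q' ∉ P ∧ IsChild T n p q' ∧ q' ∈ Support T P x) := by
  have hpP : p ∈ P := by_contra fun hp => hqP ((hbip q p hchild.1).2 hp)
  have hcheck : ∀ q', IsChild T n p q' → q' ∉ P := fun q' hc => (hbip p q' hc.1).1 hpP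
  have hmem : ∀ q', IsChild T n p q' → q' ∈ Support T P x :=
    fun q' hc => Or.inr ⟨hcheck q' hc, p, hpP, hc.1.symm, hxp⟩
  obtain ⟨q', hc⟩ := hT.exists_isChild_of_degree_ne_one hchild hnotleaf
  exact ⟨hmem, q', hcheck q' hc, hc, hmem q' hc⟩

/-- let `x` be a minimal deviation with support `X`, `q ∈ X` a check
node, and `p` the (unique) child variable node of `q` with `x p = 1`.  If `p` is not a
leaf of `T` (its degree is not `1`), then every child check node of `p` belongs to
`X`; in particular `q` has at least one grandchild check node lying in `X`. -/
theorem minimal_deviation_descends {V : Type} [Fintype V]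
    (T : SimpleGraph V) [DecidableRel T.Adj] (hT : T.IsTree)
    (P : Set V) (hbip : ∀ u v, T.Adj u v → (u ∈ P ↔ v ∉ P))
    (n : V) (hn : n ∈ P)
    (x : V → ZMod 2) (hx : IsMinimalDeviation T P n x)
    (q : V) (hq : q ∈ Support T P x) (hqP : q ∉ P)
    (p : V) (hchild : IsChild T n q p) (hxp : x p = 1)
    (hnotleaf : T.degree p ≠ 1) :
    (∀ q', IsChild T n p q' → q' ∈ Support T P x) ∧
    (∃ q', q' ∉ P ∧ IsChild T n p q' ∧ q' ∈ Support T P x) :=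
  minimal_deviation_descends_general T hT P hbip n x q hqP p hchild hxp hnotleaf
end
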